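/- arXiv:2107.02637 — 10 statements merged into one kernel-verified Lean document; each statement's English description precedes it below -/
import Mathlib

section
/- Under parallel trends (PT), for every d ∈ 𝒟 the average treatment effect on the treated at dose d is identified: ATT(d|d) = E[ΔY | D = d] − E[ΔY | D = d₀]; that is, E[Y_t(d) − Y_t(d₀) | D = d] = E[ΔY | D = d] − E[ΔY | D = d₀]. -/
open MeasureTheory

/-- Conditional expectation of `X` given the event `A`: `E[X | A] = E[X·1_A] / P(A)`. -/
noncomputable def cExp {Ω : Type*} [MeasurableSpace Ω] (P : Measure Ω)
    (X : Ω → ℝ) (A : Set Ω) : ℝ :=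
  (∫ ω in A, X ω ∂P) / (P A).toReal

/-- Two-period DiD with a multi-valued dose `𝒟 = {d 0, …, d J}`,
`d 0 = 0 < d 1 < ⋯ < d J`. Under parallel trends, for every dose `d j` the ATT is
identified: `ATT(d j | d j) = E[ΔY | D = d j] − E[ΔY | D = d 0]`, where
`ΔY ω = Y1 (D ω) ω − Y0 ω` is the observed outcome change. -/
theorem att_identified_under_parallel_trends
    {Ω : Type*} [MeasurableSpace Ω] (P : Measure Ω) [IsProbabilityMeasure P]
    (J : ℕ) (d : ℕ → ℝ) (hd0 : d 0 = 0)
    (hmono : ∀ i j : ℕ, i < j → j ≤ J → d i < d j)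
    (D : Ω → ℝ) (hD : Measurable D)
    (hDval : ∀ ω, ∃ j ≤ J, D ω = d j)
    (hp : ∀ j ≤ J, 0 < P {ω | D ω = d j})
    (Y0 : Ω → ℝ) (hY0m : Measurable Y0) (hY0i : Integrable Y0 P)
    (Y1 : ℝ → Ω → ℝ)
    (hY1m : ∀ j ≤ J, Measurable (Y1 (d j)))
    (hY1i : ∀ j ≤ J, Integrable (Y1 (d j)) P)
    (hPT : ∀ j ≤ J,
      cExp P (fun ω => Y1 (d 0) ω - Y0 ω) {ω | D ω = d j} =
        cExp P (fun ω => Y1 (d 0) ω - Y0 ω) {ω | D ω = d 0}) :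
    ∀ j ≤ J,
      cExp P (fun ω => Y1 (d j) ω - Y1 (d 0) ω) {ω | D ω = d j} =
        cExp P (fun ω => Y1 (D ω) ω - Y0 ω) {ω | D ω = d j} -
          cExp P (fun ω => Y1 (D ω) ω - Y0 ω) {ω | D ω = d 0} := by
  intro j hj
  have hj0 : 0 ≤ J := Nat.zero_le J
  set A : Set Ω := {ω | D ω = d j} with hAdef
  set A0 : Set Ω := {ω | D ω = d 0} with hA0def
  have hA : MeasurableSet A := hD (measurableSet_singleton (d j))
  have hA0 : MeasurableSet A0 := hD (measurableSet_singleton (d 0))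
  -- replace observed outcome by potential outcome on each event
  have e1 : ∫ ω in A, (Y1 (D ω) ω - Y0 ω) ∂P = ∫ ω in A, (Y1 (d j) ω - Y0 ω) ∂P := by
    refine setIntegral_congr_fun hA (fun ω hω => ?_)
    have : D ω = d j := hω
    rw [this]
  have e0 : ∫ ω in A0, (Y1 (D ω) ω - Y0 ω) ∂P = ∫ ω in A0, (Y1 (d 0) ω - Y0 ω) ∂P := by
    refine setIntegral_congr_fun hA0 (fun ω hω => ?_)
    have : D ω = d 0 := hω
    rw [this]
  have hij : IntegrableOn (fun ω => Y1 (d j) ω - Y0 ω) A P :=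
    ((hY1i j hj).sub hY0i).integrableOn
  have hi0 : IntegrableOn (fun ω => Y1 (d 0) ω - Y0 ω) A P :=
    ((hY1i 0 hj0).sub hY0i).integrableOn
  have e2 : ∫ ω in A, (Y1 (d j) ω - Y1 (d 0) ω) ∂P =
      (∫ ω in A, (Y1 (d j) ω - Y0 ω) ∂P) - ∫ ω in A, (Y1 (d 0) ω - Y0 ω) ∂P := by
    rw [← integral_sub hij hi0]
    apply setIntegral_congr_fun hA
    intro ω _
    ring
  have key : cExp P (fun ω => Y1 (d j) ω - Y1 (d 0) ω) A =
      cExp P (fun ω => Y1 (d j) ω - Y0 ω) A - cExp P (fun ω => Y1 (d 0) ω - Y0 ω) A := by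
    simp only [cExp, e2, sub_div]
  rw [key, hPT j hj]
  simp only [cExp, e1, e0]
end

section
/- Under strong parallel trends (SPT), for every d ∈ 𝒟 the average treatment effect of dose d is identified: ATE(d) = E[ΔY | D = d] − E[ΔY | D = d₀]; that is, E[Y_t(d) − Y_t(d₀)] = E[ΔY | D = d] − E[ΔY | D = d₀]. -/
open MeasureTheory

/-- Under strong parallel trends, for every dose `d j` the ATE is
identified: `ATE(d j) = E[ΔY | D = d j] − E[ΔY | D = d 0]`, where
`ΔY ω = Y1 (D ω) ω − Y0 ω` is the observed outcome change. -/
theorem ate_identified_under_strong_parallel_trends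
    {Ω : Type*} [MeasurableSpace Ω] (P : Measure Ω) [IsProbabilityMeasure P]
    (J : ℕ) (d : ℕ → ℝ) (hd0 : d 0 = 0)
    (hmono : ∀ i j : ℕ, i < j → j ≤ J → d i < d j)
    (D : Ω → ℝ) (hD : Measurable D)
    (hDval : ∀ ω, ∃ j ≤ J, D ω = d j)
    (hp : ∀ j ≤ J, 0 < P {ω | D ω = d j})
    (Y0 : Ω → ℝ) (hY0m : Measurable Y0) (hY0i : Integrable Y0 P)
    (Y1 : ℝ → Ω → ℝ)
    (hY1m : ∀ j ≤ J, Measurable (Y1 (d j)))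
    (hY1i : ∀ j ≤ J, Integrable (Y1 (d j)) P)
    (hSPT : ∀ j ≤ J,
      (∫ ω, (Y1 (d j) ω - Y0 ω) ∂P) =
        cExp P (fun ω => Y1 (d j) ω - Y0 ω) {ω | D ω = d j}) :
    ∀ j ≤ J,
      (∫ ω, (Y1 (d j) ω - Y1 (d 0) ω) ∂P) =
        cExp P (fun ω => Y1 (D ω) ω - Y0 ω) {ω | D ω = d j} -
          cExp P (fun ω => Y1 (D ω) ω - Y0 ω) {ω | D ω = d 0} := by
  intro j hj
  have hkey : ∀ k ≤ J,
      cExp P (fun ω => Y1 (D ω) ω - Y0 ω) {ω | D ω = d k} =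
        cExp P (fun ω => Y1 (d k) ω - Y0 ω) {ω | D ω = d k} := by
    intro k hk
    unfold cExp
    congr 1
    apply setIntegral_congr_fun (hD (measurableSet_singleton (d k)))
    intro ω hω
    have h : D ω = d k := hω
    simp only [h]
  rw [hkey j hj, hkey 0 (Nat.zero_le J), ← hSPT j hj, ← hSPT 0 (Nat.zero_le J)]
  have h1 := integral_sub ((hY1i j hj).sub hY0i) ((hY1i 0 (Nat.zero_le J)).sub hY0i)
  simp only [Pi.sub_apply] at h1
  rw [← h1]
  congr 1
  funext ω
  ring
end

section
/- Under parallel trends (PT), for every j ∈ {1, …, J}, the difference in observed outcome paths between adjacent dose groups equals the average causal response on the treated plus a selection-bias term: E[ΔY | D = d_j] − E[ΔY | D = d_{j−1}] = ACRT(d_j|d_j) + (ATT(d_{j−1}|d_j) − ATT(d_{j−1}|d_{j−1})). -/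
open MeasureTheory

section cExp

variable {Ω : Type*} [MeasurableSpace Ω] (P : Measure Ω)

theorem cExp_sub_eq_cExp_sub_add_cExp_sub {f g h : Ω → ℝ} {A : Set Ω}
    (hf : IntegrableOn f A P) (hg : IntegrableOn g A P) (hh : IntegrableOn h A P) :
    cExp P (fun ω => f ω - h ω) A =
      cExp P (fun ω => f ω - g ω) A + cExp P (fun ω => g ω - h ω) A := by
  have h_add := integral_add (hf.sub hg) (hg.sub hh)
  simp only [Pi.sub_apply, sub_add_sub_cancel] at h_add
  simp only [cExp, h_add, add_div]

theorem cExp_levelSet_apply {D : Ω → ℝ} (hD : Measurable D) (F : ℝ → Ω → ℝ) (x : ℝ) :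
    cExp P (fun ω => F (D ω) ω) {ω | D ω = x} = cExp P (F x) {ω | D ω = x} := by
  unfold cExp
  congr 1
  refine setIntegral_congr_fun (hD (measurableSet_singleton x)) fun ω hω => ?_
  rw [(hω : D ω = x)]

end cExp

theorem acrt_plus_selection_bias_under_parallel_trends_general
    {Ω : Type*} [MeasurableSpace Ω] (P : Measure Ω)
    (J : ℕ) (d : ℕ → ℝ)
    (D : Ω → ℝ) (hD : Measurable D)
    (Y0 : Ω → ℝ) (hY0i : Integrable Y0 P)
    (Y1 : ℝ → Ω → ℝ)
    (hY1i : ∀ j ≤ J, Integrable (Y1 (d j)) P)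
    (hPT : ∀ j ≤ J,
      cExp P (fun ω => Y1 (d 0) ω - Y0 ω) {ω | D ω = d j} =
        cExp P (fun ω => Y1 (d 0) ω - Y0 ω) {ω | D ω = d 0}) :
    ∀ j : ℕ, 1 ≤ j → j ≤ J →
      cExp P (fun ω => Y1 (D ω) ω - Y0 ω) {ω | D ω = d j} -
        cExp P (fun ω => Y1 (D ω) ω - Y0 ω) {ω | D ω = d (j - 1)} =
      cExp P (fun ω => Y1 (d j) ω - Y1 (d (j - 1)) ω) {ω | D ω = d j} +
        (cExp P (fun ω => Y1 (d (j - 1)) ω - Y1 (d 0) ω) {ω | D ω = d j} -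
          cExp P (fun ω => Y1 (d (j - 1)) ω - Y1 (d 0) ω) {ω | D ω = d (j - 1)}) := by
  intro j _ hjJ
  have hj1J : j - 1 ≤ J := (Nat.sub_le j 1).trans hjJ
  have h0 := hY1i 0 J.zero_le
  have hj := hY1i j hjJ
  have hj1 := hY1i (j - 1) hj1J
  rw [cExp_levelSet_apply P hD (fun x ω => Y1 x ω - Y0 ω),
    cExp_levelSet_apply P hD (fun x ω => Y1 x ω - Y0 ω),
    cExp_sub_eq_cExp_sub_add_cExp_sub P hj.integrableOn hj1.integrableOn hY0i.integrableOn,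
    cExp_sub_eq_cExp_sub_add_cExp_sub P hj1.integrableOn h0.integrableOn hY0i.integrableOn,
    cExp_sub_eq_cExp_sub_add_cExp_sub P hj1.integrableOn h0.integrableOn hY0i.integrableOn,
    hPT j hjJ, hPT (j - 1) hj1J]
  ring

/-- Under parallel trends, for every `j ∈ {1, …, J}`, the difference in
observed outcome paths between adjacent dose groups equals
`ACRT(d j | d j)` plus the selection-bias term `ATT(d (j-1) | d j) − ATT(d (j-1) | d (j-1))`,
where `ATT(a|b) = E[Y1 a − Y1 (d 0) | D = b]` and
`ACRT(d j|d j) = E[Y1 (d j) − Y1 (d (j-1)) | D = d j]`. -/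
theorem acrt_plus_selection_bias_under_parallel_trends
    {Ω : Type*} [MeasurableSpace Ω] (P : Measure Ω) [IsProbabilityMeasure P]
    (J : ℕ) (d : ℕ → ℝ) (hd0 : d 0 = 0)
    (hmono : ∀ i j : ℕ, i < j → j ≤ J → d i < d j)
    (D : Ω → ℝ) (hD : Measurable D)
    (hDval : ∀ ω, ∃ j ≤ J, D ω = d j)
    (hp : ∀ j ≤ J, 0 < P {ω | D ω = d j})
    (Y0 : Ω → ℝ) (hY0m : Measurable Y0) (hY0i : Integrable Y0 P)
    (Y1 : ℝ → Ω → ℝ)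
    (hY1m : ∀ j ≤ J, Measurable (Y1 (d j)))
    (hY1i : ∀ j ≤ J, Integrable (Y1 (d j)) P)
    (hPT : ∀ j ≤ J,
      cExp P (fun ω => Y1 (d 0) ω - Y0 ω) {ω | D ω = d j} =
        cExp P (fun ω => Y1 (d 0) ω - Y0 ω) {ω | D ω = d 0}) :
    ∀ j : ℕ, 1 ≤ j → j ≤ J →
      cExp P (fun ω => Y1 (D ω) ω - Y0 ω) {ω | D ω = d j} -
        cExp P (fun ω => Y1 (D ω) ω - Y0 ω) {ω | D ω = d (j - 1)} =
      cExp P (fun ω => Y1 (d j) ω - Y1 (d (j - 1)) ω) {ω | D ω = d j} +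
        (cExp P (fun ω => Y1 (d (j - 1)) ω - Y1 (d 0) ω) {ω | D ω = d j} -
          cExp P (fun ω => Y1 (d (j - 1)) ω - Y1 (d 0) ω) {ω | D ω = d (j - 1)}) :=
  acrt_plus_selection_bias_under_parallel_trends_general P J d D hD Y0 hY0i Y1 hY1i hPT
end

section
/- Under strong parallel trends (SPT), for every j ∈ {1, …, J}, the difference in observed outcome paths between adjacent dose groups identifies the average causal response: E[ΔY | D = d_j] − E[ΔY | D = d_{j−1}] = ACR(d_j). -/
open MeasureTheory

/-- Under strong parallel trends, for every `j ∈ {1, …, J}`, the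
difference in observed outcome paths between adjacent dose groups identifies the average
causal response `ACR(d j) = E[Y1 (d j) − Y1 (d (j-1))]`. -/
theorem acr_identified_under_strong_parallel_trends
    {Ω : Type*} [MeasurableSpace Ω] (P : Measure Ω) [IsProbabilityMeasure P]
    (J : ℕ) (d : ℕ → ℝ) (hd0 : d 0 = 0)
    (hmono : ∀ i j : ℕ, i < j → j ≤ J → d i < d j)
    (D : Ω → ℝ) (hD : Measurable D)
    (hDval : ∀ ω, ∃ j ≤ J, D ω = d j)
    (hp : ∀ j ≤ J, 0 < P {ω | D ω = d j})
    (Y0 : Ω → ℝ) (hY0m : Measurable Y0) (hY0i : Integrable Y0 P)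
    (Y1 : ℝ → Ω → ℝ)
    (hY1m : ∀ j ≤ J, Measurable (Y1 (d j)))
    (hY1i : ∀ j ≤ J, Integrable (Y1 (d j)) P)
    (hSPT : ∀ j ≤ J,
      (∫ ω, (Y1 (d j) ω - Y0 ω) ∂P) =
        cExp P (fun ω => Y1 (d j) ω - Y0 ω) {ω | D ω = d j}) :
    ∀ j : ℕ, 1 ≤ j → j ≤ J →
      cExp P (fun ω => Y1 (D ω) ω - Y0 ω) {ω | D ω = d j} -
        cExp P (fun ω => Y1 (D ω) ω - Y0 ω) {ω | D ω = d (j - 1)} =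
      ∫ ω, (Y1 (d j) ω - Y1 (d (j - 1)) ω) ∂P := by
  have key : ∀ k ≤ J,
      cExp P (fun ω => Y1 (D ω) ω - Y0 ω) {ω | D ω = d k} =
        ∫ ω, (Y1 (d k) ω - Y0 ω) ∂P := by
    intro k hk
    have hset : MeasurableSet {ω | D ω = d k} := hD (measurableSet_singleton (d k))
    have hcongr : ∫ ω in {ω | D ω = d k}, (Y1 (D ω) ω - Y0 ω) ∂P =
        ∫ ω in {ω | D ω = d k}, (Y1 (d k) ω - Y0 ω) ∂P := by
      refine setIntegral_congr_fun hset ?_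
      intro ω hω
      simp only [Set.mem_setOf_eq] at hω
      show Y1 (D ω) ω - Y0 ω = Y1 (d k) ω - Y0 ω
      rw [hω]
    rw [hSPT k hk]
    unfold cExp
    rw [hcongr]
  intro j hj1 hjJ
  have hj1J : j - 1 ≤ J := le_trans (Nat.sub_le j 1) hjJ
  have h1 : Integrable (fun ω => Y1 (d j) ω - Y0 ω) P := (hY1i j hjJ).sub hY0i
  have h2 : Integrable (fun ω => Y1 (d (j - 1)) ω - Y0 ω) P := (hY1i (j - 1) hj1J).sub hY0i
  rw [key j hjJ, key (j - 1) hj1J, ← integral_sub h1 h2]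
  congr 1
  ext ω
  ring
end

section
/- With a continuous dose, the two-way fixed-effects coefficient decomposes as β^twfe = ∫_{d_L}^{d_U} w₁(l)·m′(l) dl + w₀·(m(d_L) − m(0))/d_L, where w₁(l) := (E[D | D ≥ l] − E[D])·P(D ≥ l)/Var(D) and w₀ := (E[D | D > 0] − E[D])·P(D > 0)·d_L/Var(D); moreover w₁(l) ≥ 0 for every l ∈ [d_L, d_U], w₀ > 0, and ∫_{d_L}^{d_U} w₁(l) dl + w₀ = 1. -/
open MeasureTheory

/-- Mean of a real random variable. -/
noncomputable def meanR {Ω : Type*} [MeasurableSpace Ω] (P : Measure Ω) (X : Ω → ℝ) : ℝ :=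
  ∫ ω, X ω ∂P

/-- Variance: `Var(X) = E[X²] − (E[X])²`. -/
noncomputable def varR {Ω : Type*} [MeasurableSpace Ω] (P : Measure Ω) (X : Ω → ℝ) : ℝ :=
  meanR P (fun ω => X ω ^ 2) - (meanR P X) ^ 2

/-- Population two-way fixed-effects coefficient from regressing the outcome change `ΔY`
on the dose `D`: `β^twfe = E[(D − E[D])·ΔY] / Var(D)`. -/
noncomputable def betaTWFE {Ω : Type*} [MeasurableSpace Ω] (P : Measure Ω)
    (D ΔY : Ω → ℝ) : ℝ :=
  (∫ ω, (D ω - meanR P D) * ΔY ω ∂P) / varR P D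

/-- Continuous-dose TWFE weight on dose `l`:
`w₁(l) = (E[D | D ≥ l] − E[D])·P(D ≥ l) / Var(D)`. -/
noncomputable def w1 {Ω : Type*} [MeasurableSpace Ω] (P : Measure Ω)
    (D : Ω → ℝ) (l : ℝ) : ℝ :=
  (cExp P D {ω | l ≤ D ω} - meanR P D) * (P {ω | l ≤ D ω}).toReal / varR P D

/-- Weight on the untreated-to-lowest-dose comparison:
`w₀ = (E[D | D > 0] − E[D])·P(D > 0)·d_L / Var(D)`. -/
noncomputable def w0 {Ω : Type*} [MeasurableSpace Ω] (P : Measure Ω)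
    (D : Ω → ℝ) (dL : ℝ) : ℝ :=
  (cExp P D {ω | 0 < D ω} - meanR P D) * (P {ω | 0 < D ω}).toReal * dL / varR P D

/-!
Write `H l := E[(D - E D) · 1{l ≤ D}]` (`tailCov`), so that `w₁ = H / Var D` and
`w₀ = H d_L · d_L / Var D`. On the support `{0} ∪ [d_L, d_U]` of `D`,
`m D = m 0 + 1{d_L ≤ D} (m d_L - m 0) + ∫_{d_L}^{d_U} 1{l ≤ D} m' l dl`,
so multiplying by `D - E D` and swapping the integrals gives
`Cov(D, m D) = H d_L (m d_L - m 0) + ∫ H m'`. Since `m ∘ D` is a version of `E[ΔY | D]`,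
`β^twfe = Cov(D, m D) / Var D`, which is the decomposition; with `m = id` the same identity
reads `Var D = H d_L · d_L + ∫ H`, i.e. the weights sum to one. Finally `H ≥ 0` because the
upper tail of `D` has mean at least `E D`, and `H d_L = E D · P(D = 0) > 0`.
-/

open Set

section

variable {Ω : Type*} [MeasurableSpace Ω] {P : Measure Ω}

theorem ae_eq_or_mem_of_map_eq {D : Ω → ℝ} (hD : AEMeasurable D P) {x₀ : ℝ} {c : ENNReal}
    {f : ℝ → ℝ} {S : Set ℝ} (hS : MeasurableSet S) (hf : ∀ x ∉ S, f x = 0)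
    (hlaw : P.map D =
      c • Measure.dirac x₀ + volume.withDensity (fun x => ENNReal.ofReal (f x))) :
    ∀ᵐ ω ∂P, D ω = x₀ ∨ D ω ∈ S := by
  refine ae_of_ae_map (p := fun y => y = x₀ ∨ y ∈ S) hD ?_
  rw [hlaw, ae_add_measure_iff]
  constructor
  · exact Measure.ae_smul_measure (by simp [ae_dirac_eq]) c
  · have hSc : volume.withDensity (fun x => ENNReal.ofReal (f x)) Sᶜ = 0 := by
      rw [withDensity_apply _ hS.compl]
      exact setLIntegral_eq_zero hS.compl fun x hx => by simp [hf x hx]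
    filter_upwards [measure_eq_zero_iff_ae_notMem.1 hSc] with x hx
    exact Or.inr (not_not.1 hx)

theorem setIntegral_Iic_derivWithin_eq_sub {m : ℝ → ℝ} {a b x : ℝ} (hab : a < b)
    (hm : ContDiffOn ℝ 1 m (Icc a b)) (hx : x ∈ Icc a b) :
    ∫ l in Iic x, derivWithin m (Icc a b) l ∂(volume.restrict (Ioc a b)) = m x - m a := by
  rw [Measure.restrict_restrict measurableSet_Iic, Iic_inter_Ioc_of_le hx.2,
    ← intervalIntegral.integral_of_le hx.1]
  refine intervalIntegral.integral_eq_sub_of_hasDerivAt_of_le hx.1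
    (hm.continuousOn.mono (Icc_subset_Icc_right hx.2)) (fun t ht => ?_) ?_
  · have ht' : t ∈ Ioo a b := ⟨ht.1, ht.2.trans_le hx.2⟩
    exact ((hm.differentiableOn one_ne_zero) t (Ioo_subset_Icc_self ht')).hasDerivWithinAt
      |>.hasDerivAt (Icc_mem_nhds ht'.1 ht'.2)
  · exact ((hm.continuousOn_derivWithin (uniqueDiffOn_Icc hab) le_rfl).mono
      (Icc_subset_Icc_right hx.2)).intervalIntegrable_of_Icc hx.1

section Fubini

variable {ν : Measure ℝ} {D Y : Ω → ℝ} {ψ : ℝ → ℝ}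

omit [MeasurableSpace Ω] in
theorem integral_indicator_le_mul_prod_right (ω : Ω) :
    ∫ l, {q : Ω × ℝ | q.2 ≤ D q.1}.indicator (fun q => Y q.1 * ψ q.2) (ω, l) ∂ν =
      Y ω * ∫ l in Iic (D ω), ψ l ∂ν := by
  rw [← integral_indicator measurableSet_Iic, ← integral_const_mul]
  congr 1 with l
  by_cases h : l ≤ D ω <;> simp [indicator, h]

theorem integrable_indicator_le_mul_prod (hD : Measurable D) (hY : Integrable Y P)
    (hψ : Integrable ψ ν) :
    Integrable ({q : Ω × ℝ | q.2 ≤ D q.1}.indicator fun q => Y q.1 * ψ q.2) (P.prod ν) :=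
  (hY.mul_prod hψ).indicator (measurableSet_le measurable_snd (hD.comp measurable_fst))

theorem integrable_mul_setIntegral_Iic [SFinite ν] (hD : Measurable D) (hY : Integrable Y P)
    (hψ : Integrable ψ ν) : Integrable (fun ω => Y ω * ∫ l in Iic (D ω), ψ l ∂ν) P :=
  (integrable_indicator_le_mul_prod hD hY hψ).integral_prod_left.congr
    (.of_forall integral_indicator_le_mul_prod_right)

theorem integral_mul_setIntegral_Iic [SFinite P] [SFinite ν] (hD : Measurable D)
    (hY : Integrable Y P) (hψ : Integrable ψ ν) :
    ∫ ω, Y ω * (∫ l in Iic (D ω), ψ l ∂ν) ∂P =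
      ∫ l, (∫ ω in {ω | l ≤ D ω}, Y ω ∂P) * ψ l ∂ν := by
  have hswap := integral_integral_swap
    (f := fun ω l => {q : Ω × ℝ | q.2 ≤ D q.1}.indicator (fun q => Y q.1 * ψ q.2) (ω, l))
    (integrable_indicator_le_mul_prod hD hY hψ)
  simp only [integral_indicator_le_mul_prod_right] at hswap
  rw [hswap]
  congr 1 with l
  rw [← integral_indicator (measurableSet_le measurable_const hD), ← integral_mul_const]
  congr 1 with ω
  by_cases h : l ≤ D ω <;> simp [indicator, h]

end Fubini

theorem integral_mul_comp_eq_of_ae_eq_or_mem_Icc [SFinite P] {D Y : Ω → ℝ} {m : ℝ → ℝ}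
    {a b c : ℝ} (hca : c < a) (hab : a < b) (hD : Measurable D) (hY : Integrable Y P)
    (hsupp : ∀ᵐ ω ∂P, D ω = c ∨ D ω ∈ Icc a b) (hm : ContDiffOn ℝ 1 m (Icc a b)) :
    ∫ ω, Y ω * m (D ω) ∂P =
      (∫ ω, Y ω ∂P) * m c + (∫ ω in {ω | a ≤ D ω}, Y ω ∂P) * (m a - m c) +
        ∫ l in a..b, (∫ ω in {ω | l ≤ D ω}, Y ω ∂P) * derivWithin m (Icc a b) l := by
  set ν := volume.restrict (Ioc a b)
  have hψ : Integrable (derivWithin m (Icc a b)) ν :=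
    (hm.continuousOn_derivWithin (uniqueDiffOn_Icc hab) le_rfl).integrableOn_Icc.mono_set
      Ioc_subset_Icc_self
  have hA : MeasurableSet {ω | a ≤ D ω} := measurableSet_le measurable_const hD
  have hpt : ∀ᵐ ω ∂P, Y ω * m (D ω) =
      Y ω * m c + {ω | a ≤ D ω}.indicator Y ω * (m a - m c) +
        Y ω * ∫ l in Iic (D ω), derivWithin m (Icc a b) l ∂ν := by
    filter_upwards [hsupp] with ω hω
    rcases hω with hc | hI
    · have hν : ν.restrict (Iic (D ω)) = 0 := by
        rw [Measure.restrict_restrict measurableSet_Iic, hc, Iic_inter_Ioc_of_le (hca.trans hab).le,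
          Ioc_eq_empty hca.not_gt, Measure.restrict_empty]
      rw [hν, integral_zero_measure, indicator_of_notMem (by simpa [hc] using hca), hc]
      ring
    · rw [setIntegral_Iic_derivWithin_eq_sub hab hm hI,
        indicator_of_mem (show ω ∈ {ω | a ≤ D ω} from hI.1)]
      ring
  rw [integral_congr_ae hpt, integral_add (by fun_prop) (integrable_mul_setIntegral_Iic hD hY hψ),
    integral_add (by fun_prop) ((hY.indicator hA).mul_const _), integral_mul_const,
    integral_mul_const, integral_indicator hA, integral_mul_setIntegral_Iic hD hY hψ,
    intervalIntegral.integral_of_le hab.le]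

theorem integral_mul_comp_eq_of_ae_mem_Icc {D ΔY : Ω → ℝ} {m h : ℝ → ℝ} {a b : ℝ}
    (hab : a ≤ b)
    (hmver : ∀ g : ℝ → ℝ, Measurable g → (∃ C, ∀ x, |g x| ≤ C) →
      ∫ ω, ΔY ω * g (D ω) ∂P = ∫ ω, m (D ω) * g (D ω) ∂P)
    (hD : ∀ᵐ ω ∂P, D ω ∈ Icc a b) (hh : Continuous h) :
    ∫ ω, ΔY ω * h (D ω) ∂P = ∫ ω, m (D ω) * h (D ω) ∂P := by
  obtain ⟨C, hC⟩ := isCompact_Icc.exists_bound_of_continuousOn (hh.continuousOn (s := Icc a b))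
  set g := fun x => h (max a (min x b))
  have hg : ∀ᵐ ω ∂P, g (D ω) = h (D ω) :=
    hD.mono fun ω hω => by simp only [g, min_eq_left hω.2, max_eq_right hω.1]
  calc ∫ ω, ΔY ω * h (D ω) ∂P = ∫ ω, ΔY ω * g (D ω) ∂P :=
        integral_congr_ae (hg.mono fun ω hω => by simp only [hω])
    _ = ∫ ω, m (D ω) * g (D ω) ∂P :=
        hmver g (by fun_prop)
          ⟨C, fun x => hC _ ⟨le_max_left _ _, max_le hab (min_le_right _ _)⟩⟩
    _ = ∫ ω, m (D ω) * h (D ω) ∂P :=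
        integral_congr_ae (hg.mono fun ω hω => by simp only [hω])

noncomputable def tailCov (P : Measure Ω) (D : Ω → ℝ) (l : ℝ) : ℝ :=
  ∫ ω in {ω | l ≤ D ω}, (D ω - meanR P D) ∂P

theorem cExp_sub_mul_toReal [IsFiniteMeasure P] {X : Ω → ℝ} (hX : Integrable X P) (c : ℝ)
    (A : Set Ω) : (cExp P X A - c) * (P A).toReal = ∫ ω in A, (X ω - c) ∂P := by
  rw [integral_sub hX.integrableOn (integrable_const c).integrableOn, setIntegral_const,
    smul_eq_mul, measureReal_def, sub_mul, cExp]
  rcases eq_or_ne (P A) 0 with hA | hA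
  · simp [hA, Measure.restrict_eq_zero.2 hA]
  · rw [div_mul_cancel₀ _ (ENNReal.toReal_ne_zero.2 ⟨hA, measure_ne_top P A⟩), mul_comm]

theorem w1_eq_tailCov_div [IsFiniteMeasure P] {D : Ω → ℝ} (hD : Integrable D P) (l : ℝ) :
    w1 P D l = tailCov P D l / varR P D := by
  rw [w1, cExp_sub_mul_toReal hD, tailCov]

theorem varR_eq_integral_sub_meanR_mul {X : Ω → ℝ} (hX : Integrable X P)
    (hX2 : Integrable (fun ω => X ω ^ 2) P) :
    varR P X = ∫ ω, (X ω - meanR P X) * X ω ∂P := by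
  simp only [sub_mul]
  rw [integral_sub (by simpa only [sq] using hX2) (hX.const_mul _), integral_const_mul, varR]
  simp only [meanR, sq]

section Probability

variable [IsProbabilityMeasure P] {X : Ω → ℝ}

theorem integral_sub_meanR (hX : Integrable X P) : ∫ ω, (X ω - meanR P X) ∂P = 0 := by
  rw [integral_sub hX (integrable_const _), integral_const, probReal_univ, one_smul, meanR,
    sub_self]

theorem tailCov_nonneg (hX : Measurable X) (hXi : Integrable X P) (l : ℝ) :
    0 ≤ tailCov P X l := by
  rw [tailCov]
  set A := {ω | l ≤ X ω}
  have hA : MeasurableSet A := measurableSet_le measurable_const hX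
  have hp : P.real A ≤ 1 := measureReal_le_one
  have hin : l * P.real A ≤ ∫ ω in A, X ω ∂P := by
    have := setIntegral_mono_on (integrable_const l).integrableOn hXi.integrableOn hA fun _ h => h
    rwa [setIntegral_const, smul_eq_mul, mul_comm] at this
  have hout : ∫ ω in Aᶜ, X ω ∂P ≤ l * (1 - P.real A) := by
    have := setIntegral_mono_on hXi.integrableOn (integrable_const l).integrableOn hA.compl
      fun x (h : ¬l ≤ X x) => (not_le.1 h).le
    rwa [setIntegral_const, smul_eq_mul, probReal_compl_eq_one_sub hA, mul_comm] at this
  -- with `E X = ∫_A X + ∫_{Aᶜ} X`, the claim is `(1 - P A) ∫_A X ≥ P A ∫_{Aᶜ} X`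
  rw [integral_sub hXi.integrableOn (integrable_const _).integrableOn, setIntegral_const,
    smul_eq_mul, meanR, ← integral_add_compl hA hXi]
  nlinarith [mul_nonneg (sub_nonneg.2 hp) (sub_nonneg.2 hin),
    mul_nonneg (measureReal_nonneg (μ := P) (s := A)) (sub_nonneg.2 hout)]

end Probability

section Dose

variable {D : Ω → ℝ} {dL dU : ℝ} (hsupp : ∀ᵐ ω ∂P, D ω = 0 ∨ D ω ∈ Icc dL dU)
  (hdL : 0 < dL)
include hsupp hdL

theorem w0_eq_tailCov_mul_div [IsFiniteMeasure P] (hD : Integrable D P) :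
    w0 P D dL = tailCov P D dL * dL / varR P D := by
  have hpos : {ω | 0 < D ω} =ᵐ[P] {ω | dL ≤ D ω} :=
    Filter.eventuallyEq_set.2 <| hsupp.mono fun ω hω => by
      rcases hω with h | h
      · simp [h, hdL]
      · exact iff_of_true (hdL.trans_le h.1) h.1
  rw [w0, cExp_sub_mul_toReal hD, setIntegral_congr_set hpos, tailCov]

theorem ae_mem_Icc_zero (hdLU : dL ≤ dU) : ∀ᵐ ω ∂P, D ω ∈ Icc 0 dU :=
  hsupp.mono fun ω hω => by
    rcases hω with h | h
    · simp [h, hdL.le.trans hdLU]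
    · exact ⟨hdL.le.trans h.1, h.2⟩

variable [IsProbabilityMeasure P]

theorem meanR_pos (hD : Measurable D) (hDi : Integrable D P) (hp0 : P.real {ω | D ω = 0} < 1) :
    0 < meanR P D := by
  have hA : MeasurableSet {ω | D ω = 0} := hD (measurableSet_singleton 0)
  have hle : ∀ᵐ ω ∂P, {ω | D ω = 0}ᶜ.indicator (fun _ => dL) ω ≤ D ω := by
    filter_upwards [hsupp] with ω hω
    rcases hω with h | h
    · simp [h]
    · simpa [indicator, (hdL.trans_le h.1).ne'] using h.1
  calc 0 < P.real {ω | D ω = 0}ᶜ • dL := by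
        rw [probReal_compl_eq_one_sub hA, smul_eq_mul]
        exact mul_pos (sub_pos.2 hp0) hdL
    _ = ∫ ω, {ω | D ω = 0}ᶜ.indicator (fun _ => dL) ω ∂P :=
        (integral_indicator_const _ hA.compl).symm
    _ ≤ meanR P D := integral_mono_ae ((integrable_const dL).indicator hA.compl) hDi hle

theorem tailCov_eq_meanR_mul (hD : Measurable D) (hDi : Integrable D P) :
    tailCov P D dL = meanR P D * P.real {ω | D ω = 0} := by
  have hA : MeasurableSet {ω | D ω = 0} := hD (measurableSet_singleton 0)
  have hcompl : {ω | dL ≤ D ω} =ᵐ[P] ({ω | D ω = 0}ᶜ : Set Ω) :=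
    Filter.eventuallyEq_set.2 <| hsupp.mono fun ω hω => by
      rcases hω with h | h
      · exact iff_of_false (by simpa [h] using hdL) (not_not.2 h)
      · exact iff_of_true h.1 (hdL.trans_le h.1).ne'
  have hatom : ∫ ω in {ω | D ω = 0}, (D ω - meanR P D) ∂P =
      -(meanR P D * P.real {ω | D ω = 0}) := by
    rw [setIntegral_congr_fun hA fun ω (h : D ω = 0) => by rw [h, zero_sub], setIntegral_const,
      smul_eq_mul, mul_neg, mul_comm]
  have hsplit := integral_add_compl (f := fun ω => D ω - meanR P D) hA
    (hDi.sub (integrable_const _))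
  rw [tailCov, setIntegral_congr_set hcompl]
  linarith [integral_sub_meanR hDi]

theorem integral_sub_meanR_mul_comp_eq {m : ℝ → ℝ} (hdLU : dL < dU) (hD : Measurable D)
    (hDi : Integrable D P) (hm : ContDiffOn ℝ 1 m (Icc dL dU)) :
    ∫ ω, (D ω - meanR P D) * m (D ω) ∂P =
      tailCov P D dL * (m dL - m 0) +
        ∫ l in dL..dU, tailCov P D l * derivWithin m (Icc dL dU) l := by
  rw [integral_mul_comp_eq_of_ae_eq_or_mem_Icc (Y := fun ω => D ω - meanR P D) hdL hdLU hD
    (hDi.sub (integrable_const _)) hsupp hm, integral_sub_meanR hDi, zero_mul, zero_add]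
  rfl

theorem varR_eq_tailCov (hdLU : dL < dU) (hD : Measurable D) (hDi : Integrable D P)
    (hD2 : Integrable (fun ω => D ω ^ 2) P) :
    varR P D = tailCov P D dL * dL + ∫ l in dL..dU, tailCov P D l := by
  have hderiv : EqOn (fun l => tailCov P D l * derivWithin (fun x => x) (Icc dL dU) l)
      (tailCov P D) (uIcc dL dU) := fun l hl => by
    rw [uIcc_of_le hdLU.le] at hl
    simp only [derivWithin_id' l _ (uniqueDiffOn_Icc hdLU l hl), mul_one]
  rw [varR_eq_integral_sub_meanR_mul hDi hD2,
    integral_sub_meanR_mul_comp_eq (m := fun x => x) hsupp hdL hdLU hD hDi contDiffOn_id,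
    intervalIntegral.integral_congr hderiv, sub_zero]

theorem tailCov_pos (hD : Measurable D) (hDi : Integrable D P)
    (hp : P.real {ω | D ω = 0} ∈ Ioo 0 1) : 0 < tailCov P D dL := by
  rw [tailCov_eq_meanR_mul hsupp hdL hD hDi]
  exact mul_pos (meanR_pos hsupp hdL hD hDi hp.2) hp.1

theorem varR_pos (hdLU : dL < dU) (hD : Measurable D) (hDi : Integrable D P)
    (hD2 : Integrable (fun ω => D ω ^ 2) P) (hp : P.real {ω | D ω = 0} ∈ Ioo 0 1) :
    0 < varR P D := by
  have := tailCov_pos hsupp hdL hD hDi hp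
  have : 0 ≤ ∫ l in dL..dU, tailCov P D l :=
    intervalIntegral.integral_nonneg hdLU.le fun l _ => tailCov_nonneg hD hDi l
  rw [varR_eq_tailCov hsupp hdL hdLU hD hDi hD2]
  positivity

end Dose

end

theorem twfe_decomposition_continuous_general
    {Ω : Type*} [MeasurableSpace Ω] (P : Measure Ω) [IsProbabilityMeasure P]
    (dL dU : ℝ) (hdL : 0 < dL) (hdLU : dL < dU)
    (D : Ω → ℝ) (hD : Measurable D)
    (p0 : ℝ) (hp0 : 0 < p0) (hp01 : p0 < 1)
    (hp0def : P {ω | D ω = 0} = ENNReal.ofReal p0)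
    (f : ℝ → ℝ)
    (hfzero : ∀ x ∉ Set.Icc dL dU, f x = 0)
    (hlaw : Measure.map D P =
      ENNReal.ofReal p0 • Measure.dirac (0 : ℝ) +
        (volume : Measure ℝ).withDensity (fun x => ENNReal.ofReal (f x)))
    (ΔY : Ω → ℝ)
    (m : ℝ → ℝ) (hm : ContDiffOn ℝ 1 m (Set.Icc dL dU))
    (hmver : ∀ g : ℝ → ℝ, Measurable g → (∃ C, ∀ x, |g x| ≤ C) →
      ∫ ω, ΔY ω * g (D ω) ∂P = ∫ ω, m (D ω) * g (D ω) ∂P) :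
    betaTWFE P D ΔY =
      (∫ l in dL..dU, w1 P D l * derivWithin m (Set.Icc dL dU) l) +
        w0 P D dL * ((m dL - m 0) / dL) ∧
    (∀ l ∈ Set.Icc dL dU, 0 ≤ w1 P D l) ∧
    0 < w0 P D dL ∧
    (∫ l in dL..dU, w1 P D l) + w0 P D dL = 1 := by
  have hsupp := ae_eq_or_mem_of_map_eq hD.aemeasurable measurableSet_Icc hfzero hlaw
  have hI := ae_mem_Icc_zero hsupp hdL hdLU.le
  have hL2 := memLp_of_bounded hI hD.aestronglyMeasurable 2
  have hDi : Integrable D P := hL2.integrable one_le_two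
  have hp : P.real {ω | D ω = 0} ∈ Ioo 0 1 := by
    rw [measureReal_def, hp0def, ENNReal.toReal_ofReal hp0.le]
    exact ⟨hp0, hp01⟩
  have hVarpos := varR_pos hsupp hdL hdLU hD hDi hL2.integrable_sq hp
  have hnum :
      ∫ ω, (D ω - meanR P D) * ΔY ω ∂P = ∫ ω, (D ω - meanR P D) * m (D ω) ∂P := by
    simp_rw [mul_comm (D _ - meanR P D)]
    exact integral_mul_comp_eq_of_ae_mem_Icc (hdL.trans hdLU).le hmver hI
      (h := fun x => x - meanR P D) (by fun_prop)
  refine ⟨?_, fun l _ => ?_, ?_, ?_⟩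
  · simp_rw [betaTWFE, hnum, integral_sub_meanR_mul_comp_eq hsupp hdL hdLU hD hDi hm,
      w0_eq_tailCov_mul_div hsupp hdL hDi, w1_eq_tailCov_div hDi, div_mul_eq_mul_div,
      intervalIntegral.integral_div]
    field_simp
    ring
  · rw [w1_eq_tailCov_div hDi]
    exact div_nonneg (tailCov_nonneg hD hDi l) hVarpos.le
  · rw [w0_eq_tailCov_mul_div hsupp hdL hDi]
    exact div_pos (mul_pos (tailCov_pos hsupp hdL hD hDi hp) hdL) hVarpos
  · simp_rw [w0_eq_tailCov_mul_div hsupp hdL hDi, w1_eq_tailCov_div hDi,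
      intervalIntegral.integral_div]
    field_simp
    linarith [varR_eq_tailCov hsupp hdL hdLU hD hDi hL2.integrable_sq]

/-- With a continuous dose whose law is `p₀·δ₀ + f_D·Lebesgue` with `f_D`
positive on `[d_L, d_U]` and zero outside, and `m` a continuously differentiable version of
`E[ΔY | D = ·]` on `[d_L, d_U]`, the TWFE coefficient decomposes as
`β^twfe = ∫_{d_L}^{d_U} w₁(l)·m′(l) dl + w₀·(m(d_L) − m(0))/d_L`;
moreover `w₁(l) ≥ 0` on `[d_L, d_U]`, `w₀ > 0`, and `∫_{d_L}^{d_U} w₁(l) dl + w₀ = 1`. -/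
theorem twfe_decomposition_continuous
    {Ω : Type*} [MeasurableSpace Ω] (P : Measure Ω) [IsProbabilityMeasure P]
    (dL dU : ℝ) (hdL : 0 < dL) (hdLU : dL < dU)
    (D : Ω → ℝ) (hD : Measurable D)
    (p0 : ℝ) (hp0 : 0 < p0) (hp01 : p0 < 1)
    (hp0def : P {ω | D ω = 0} = ENNReal.ofReal p0)
    (f : ℝ → ℝ) (hfm : Measurable f)
    (hfpos : ∀ x ∈ Set.Icc dL dU, 0 < f x)
    (hfzero : ∀ x ∉ Set.Icc dL dU, f x = 0)
    (hlaw : Measure.map D P =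
      ENNReal.ofReal p0 • Measure.dirac (0 : ℝ) +
        (volume : Measure ℝ).withDensity (fun x => ENNReal.ofReal (f x)))
    (ΔY : Ω → ℝ) (hΔYm : Measurable ΔY) (hΔYi : Integrable ΔY P)
    (m : ℝ → ℝ) (hm : ContDiffOn ℝ 1 m (Set.Icc dL dU))
    (hmver : ∀ g : ℝ → ℝ, Measurable g → (∃ C, ∀ x, |g x| ≤ C) →
      ∫ ω, ΔY ω * g (D ω) ∂P = ∫ ω, m (D ω) * g (D ω) ∂P) :
    betaTWFE P D ΔY =
      (∫ l in dL..dU, w1 P D l * derivWithin m (Set.Icc dL dU) l) +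
        w0 P D dL * ((m dL - m 0) / dL) ∧
    (∀ l ∈ Set.Icc dL dU, 0 ≤ w1 P D l) ∧
    0 < w0 P D dL ∧
    (∫ l in dL..dU, w1 P D l) + w0 P D dL = 1 :=
  twfe_decomposition_continuous_general P dL dU hdL hdLU D hD p0 hp0 hp01 hp0def f hfzero hlaw ΔY m
    hm hmver
end

section
/- Under alternative strong parallel trends (Alt-SPT), the average treatment effect equals the average treatment effect on the treated at every dose: ATE(d) = ATT(d|d) for all d ∈ 𝒟. -/
/-
By Alt-SPT, `E[Y_t(d) − Y_{t−1}(0) | D = l]` does not depend on `l`, for `d` and for `d₀` alike;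
subtracting, the conditional mean of `Y_t(d) − Y_t(d₀)` given `D = l` is the same for every
dose `l`, namely `ATT(d|d)`. The law of total expectation over the finitely many doses then
gives `ATE(d) = ATT(d|d)`.
-/

open MeasureTheory

section

variable {Ω : Type*} [MeasurableSpace Ω] {P : Measure Ω}

theorem cExp_sub {f g : Ω → ℝ} (A : Set Ω) (hf : Integrable f P) (hg : Integrable g P) :
    cExp P (fun ω => f ω - g ω) A = cExp P f A - cExp P g A := by
  rw [cExp, cExp, cExp, integral_sub hf.integrableOn hg.integrableOn, sub_div]

theorem cExp_sub_eq_of_cExp_sub_eq {Ya Yb Y0 : Ω → ℝ} {A B : Set Ω}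
    (hYa : Integrable Ya P) (hYb : Integrable Yb P) (hY0 : Integrable Y0 P)
    (ha : cExp P (fun ω => Ya ω - Y0 ω) A = cExp P (fun ω => Ya ω - Y0 ω) B)
    (hb : cExp P (fun ω => Yb ω - Y0 ω) A = cExp P (fun ω => Yb ω - Y0 ω) B) :
    cExp P (fun ω => Ya ω - Yb ω) A = cExp P (fun ω => Ya ω - Yb ω) B := by
  have hdiff : (fun ω => Ya ω - Yb ω) = fun ω => (Ya ω - Y0 ω) - (Yb ω - Y0 ω) := by
    funext ω; ring
  have hYa0 : Integrable (fun ω => Ya ω - Y0 ω) P := hYa.sub hY0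
  have hYb0 : Integrable (fun ω => Yb ω - Y0 ω) P := hYb.sub hY0
  rw [hdiff, cExp_sub A hYa0 hYb0, cExp_sub B hYa0 hYb0, ha, hb]

-- On a null event both sides vanish, since `cExp` then divides by `0`.
theorem setIntegral_eq_measureReal_mul_cExp [IsFiniteMeasure P] (X : Ω → ℝ) (A : Set Ω) :
    ∫ ω in A, X ω ∂P = P.real A * cExp P X A := by
  rcases eq_or_ne (P A) 0 with hA | hA
  · simp [setIntegral_measure_zero X hA, measureReal_def, hA]
  · rw [cExp, measureReal_def, mul_div_cancel₀]
    exact ENNReal.toReal_ne_zero.mpr ⟨hA, measure_ne_top P A⟩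

variable {α : Type*} [MeasurableSpace α] [MeasurableSingletonClass α] {D : Ω → α}
  {s : Finset α}

theorem integral_eq_sum_setIntegral_fiber {E : Type*} [NormedAddCommGroup E] [NormedSpace ℝ E]
    (hD : Measurable D) (hs : ∀ ω, D ω ∈ s) {X : Ω → E} (hX : Integrable X P) :
    ∫ ω, X ω ∂P = ∑ v ∈ s, ∫ ω in D ⁻¹' {v}, X ω ∂P := by
  rw [← integral_biUnion_finset s (fun v _ => hD (measurableSet_singleton v))
    (Set.pairwiseDisjoint_fiber D _) (fun _ _ => hX.integrableOn)]
  have hcover : ⋃ v ∈ s, D ⁻¹' {v} = Set.univ :=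
    Set.eq_univ_of_forall fun ω => Set.mem_iUnion₂.mpr ⟨D ω, hs ω, rfl⟩
  rw [hcover, setIntegral_univ]

theorem sum_measureReal_fiber_eq_one [IsProbabilityMeasure P] (hD : Measurable D)
    (hs : ∀ ω, D ω ∈ s) : ∑ v ∈ s, P.real (D ⁻¹' {v}) = 1 := by
  have hcover : D ⁻¹' ↑s = Set.univ := Set.eq_univ_of_forall hs
  rw [sum_measureReal_preimage_singleton s (fun v _ => hD (measurableSet_singleton v)), hcover,
    probReal_univ]

theorem integral_eq_of_cExp_fiber_eq [IsProbabilityMeasure P] (hD : Measurable D)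
    (hs : ∀ ω, D ω ∈ s) {X : Ω → ℝ} (hX : Integrable X P) {c : ℝ}
    (hc : ∀ v ∈ s, cExp P X (D ⁻¹' {v}) = c) :
    ∫ ω, X ω ∂P = c := by
  calc ∫ ω, X ω ∂P = ∑ v ∈ s, P.real (D ⁻¹' {v}) * cExp P X (D ⁻¹' {v}) := by
        simp only [integral_eq_sum_setIntegral_fiber hD hs hX, setIntegral_eq_measureReal_mul_cExp]
    _ = (∑ v ∈ s, P.real (D ⁻¹' {v})) * c := by
        rw [Finset.sum_mul]; exact Finset.sum_congr rfl fun v hv => by rw [hc v hv]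
    _ = c := by rw [sum_measureReal_fiber_eq_one hD hs, one_mul]

end

theorem ate_eq_att_under_alt_strong_parallel_trends_general
    {Ω : Type*} [MeasurableSpace Ω] (P : Measure Ω) [IsProbabilityMeasure P]
    (J : ℕ) (d : ℕ → ℝ)
    (D : Ω → ℝ) (hD : Measurable D)
    (hDval : ∀ ω, ∃ j ≤ J, D ω = d j)
    (Y0 : Ω → ℝ) (hY0i : Integrable Y0 P)
    (Y1 : ℝ → Ω → ℝ)
    (hY1i : ∀ j ≤ J, Integrable (Y1 (d j)) P)
    (hAltSPT : ∀ j ≤ J, ∀ l ≤ J,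
      cExp P (fun ω => Y1 (d j) ω - Y0 ω) {ω | D ω = d l} =
        cExp P (fun ω => Y1 (d j) ω - Y0 ω) {ω | D ω = d j}) :
    ∀ j ≤ J,
      (∫ ω, (Y1 (d j) ω - Y1 (d 0) ω) ∂P) =
        cExp P (fun ω => Y1 (d j) ω - Y1 (d 0) ω) {ω | D ω = d j} := by
  intro j hj
  have hY1i₀ := hY1i 0 J.zero_le
  refine integral_eq_of_cExp_fiber_eq (s := (Finset.Iic J).image d) hD ?_
    ((hY1i j hj).sub hY1i₀) ?_
  · intro ω
    obtain ⟨l, hl, hω⟩ := hDval ω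
    exact Finset.mem_image.mpr ⟨l, Finset.mem_Iic.mpr hl, hω.symm⟩
  · rintro _ hv
    obtain ⟨l, hl, rfl⟩ := Finset.mem_image.mp hv
    exact cExp_sub_eq_of_cExp_sub_eq (hY1i j hj) hY1i₀ hY0i
      (hAltSPT j hj l (Finset.mem_Iic.mp hl))
      ((hAltSPT 0 J.zero_le l (Finset.mem_Iic.mp hl)).trans (hAltSPT 0 J.zero_le j hj).symm)

/-- Under alternative strong parallel trends
(`E[Y1 (d j) − Y0 | D = d l] = E[Y1 (d j) − Y0 | D = d j]` for all doses `d j, d l`),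
the ATE equals the ATT at every dose: `ATE(d j) = ATT(d j | d j)`. -/
theorem ate_eq_att_under_alt_strong_parallel_trends
    {Ω : Type*} [MeasurableSpace Ω] (P : Measure Ω) [IsProbabilityMeasure P]
    (J : ℕ) (d : ℕ → ℝ) (hd0 : d 0 = 0)
    (hmono : ∀ i j : ℕ, i < j → j ≤ J → d i < d j)
    (D : Ω → ℝ) (hD : Measurable D)
    (hDval : ∀ ω, ∃ j ≤ J, D ω = d j)
    (hp : ∀ j ≤ J, 0 < P {ω | D ω = d j})
    (Y0 : Ω → ℝ) (hY0m : Measurable Y0) (hY0i : Integrable Y0 P)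
    (Y1 : ℝ → Ω → ℝ)
    (hY1m : ∀ j ≤ J, Measurable (Y1 (d j)))
    (hY1i : ∀ j ≤ J, Integrable (Y1 (d j)) P)
    (hAltSPT : ∀ j ≤ J, ∀ l ≤ J,
      cExp P (fun ω => Y1 (d j) ω - Y0 ω) {ω | D ω = d l} =
        cExp P (fun ω => Y1 (d j) ω - Y0 ω) {ω | D ω = d j}) :
    ∀ j ≤ J,
      (∫ ω, (Y1 (d j) ω - Y1 (d 0) ω) ∂P) =
        cExp P (fun ω => Y1 (d j) ω - Y1 (d 0) ω) {ω | D ω = d j} :=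
  ate_eq_att_under_alt_strong_parallel_trends_general P J d D hD hDval Y0 hY0i Y1 hY1i hAltSPT
end

section
/- With a multi-valued dose, the two-way fixed-effects coefficient equals a weighted combination of level comparisons to the untreated group, β^twfe = Σ_{d ∈ 𝒟} w^{lev}(d)·(m(d) − m(d₀)), where w^{lev}(d) := (d − E[D])·p_d/Var(D); moreover Σ_{d ∈ 𝒟} w^{lev}(d) = 0, so β^twfe cannot be interpreted as a weighted average of level effects. -/
/-! Since `D` takes finitely many values, every expectation splits over the level sets
`{D = x}`: `E[(D − E D)·ΔY] = Σₓ (x − E D)·p_x·m(x)` and `Σₓ (x − E D)·p_x = E D − E D = 0`.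
The second identity is the vanishing of the weights, and it lets one subtract the constant
`m(d₀)` from every `m(x)` without changing the sum. -/

open MeasureTheory

/-- Levels weight: `w^{lev}(d) = (d − E[D])·p_d / Var(D)`. -/
noncomputable def levelsWeight {Ω : Type*} [MeasurableSpace Ω] (P : Measure Ω)
    (D : Ω → ℝ) (dd : ℝ) : ℝ :=
  (dd - meanR P D) * (P {ω | D ω = dd}).toReal / varR P D

open MeasureTheory Finset

lemma Finset.sum_mul_sub_const_of_sum_eq_zero {ι : Type*} {s : Finset ι} {w : ι → ℝ}
    (hw : ∑ i ∈ s, w i = 0) (m : ι → ℝ) (c : ℝ) :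
    ∑ i ∈ s, w i * (m i - c) = ∑ i ∈ s, w i * m i := by
  simp only [mul_sub, sum_sub_distrib, ← sum_mul, hw, zero_mul, sub_zero]

lemma toReal_measure_mul_cExp {Ω : Type*} [MeasurableSpace Ω] {P : Measure Ω} [IsFiniteMeasure P]
    (X : Ω → ℝ) (A : Set Ω) : (P A).toReal * cExp P X A = ∫ ω in A, X ω ∂P := by
  by_cases hA : (P A).toReal = 0
  · have hA0 : P A = 0 := by simpa [ENNReal.toReal_eq_zero_iff, measure_ne_top] using hA
    simp [hA, Measure.restrict_eq_zero.mpr hA0]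
  · rw [cExp, mul_div_cancel₀ _ hA]

section LevelSets

variable {Ω : Type*} [MeasurableSpace Ω] {P : Measure Ω} {D : Ω → ℝ} {S : Finset ℝ}

lemma integral_eq_sum_setIntegral_levelSet (hD : Measurable D) (hDS : ∀ ω, D ω ∈ S)
    {f : Ω → ℝ} (hf : Integrable f P) :
    ∫ ω, f ω ∂P = ∑ x ∈ S, ∫ ω in {ω | D ω = x}, f ω ∂P := by
  have hcover : (⋃ x ∈ S, {ω | D ω = x}) = Set.univ :=
    Set.eq_univ_of_forall fun ω => Set.mem_biUnion (hDS ω) rfl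
  have hdisj : (S : Set ℝ).PairwiseDisjoint fun x => {ω | D ω = x} :=
    (Set.pairwiseDisjoint_fiber D Set.univ).subset (Set.subset_univ _)
  rw [← setIntegral_univ, ← hcover, integral_biUnion_finset S (s := fun x => {ω | D ω = x})
    (fun x _ => hD (measurableSet_singleton x)) hdisj (fun _ _ => hf.integrableOn)]

lemma integral_comp_mul_eq_sum (hD : Measurable D) (hDS : ∀ ω, D ω ∈ S)
    {g : ℝ → ℝ} (hg : Measurable g) {Y : Ω → ℝ} (hY : Integrable Y P) :
    ∫ ω, g (D ω) * Y ω ∂P = ∑ x ∈ S, g x * ∫ ω in {ω | D ω = x}, Y ω ∂P := by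
  have hgD_bound : ∀ ω, ‖g (D ω)‖ ≤ ∑ x ∈ S, |g x| := fun ω =>
    single_le_sum (f := fun x => |g x|) (fun _ _ => abs_nonneg _) (hDS ω)
  rw [integral_eq_sum_setIntegral_levelSet hD hDS
    (hY.bdd_mul (f := fun ω => g (D ω)) (hg.comp hD).aestronglyMeasurable
      (ae_of_all _ hgD_bound))]
  refine sum_congr rfl fun x _ => ?_
  rw [← integral_const_mul]
  exact setIntegral_congr_fun (hD (measurableSet_singleton x)) fun ω hω => by rw [hω.out]

variable [IsProbabilityMeasure P]

lemma sum_toReal_measure_levelSet (hD : Measurable D) (hDS : ∀ ω, D ω ∈ S) :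
    ∑ x ∈ S, (P {ω | D ω = x}).toReal = 1 := by
  simpa [measureReal_def] using
    (integral_eq_sum_setIntegral_levelSet hD hDS (integrable_const (1 : ℝ) (μ := P))).symm

lemma meanR_eq_sum (hD : Measurable D) (hDS : ∀ ω, D ω ∈ S) :
    meanR P D = ∑ x ∈ S, x * (P {ω | D ω = x}).toReal := by
  simpa [meanR, measureReal_def] using
    integral_comp_mul_eq_sum hD hDS measurable_id (integrable_const (1 : ℝ) (μ := P))

lemma sum_levelsWeight_eq_zero (hD : Measurable D) (hDS : ∀ ω, D ω ∈ S) :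
    ∑ x ∈ S, levelsWeight P D x = 0 := by
  simp only [levelsWeight, ← sum_div, sub_mul, sum_sub_distrib, ← mul_sum,
    ← meanR_eq_sum hD hDS, sum_toReal_measure_levelSet hD hDS, mul_one, sub_self, zero_div]

lemma betaTWFE_eq_sum_levelsWeight_mul_cExp (hD : Measurable D) (hDS : ∀ ω, D ω ∈ S)
    {Y : Ω → ℝ} (hY : Integrable Y P) :
    betaTWFE P D Y = ∑ x ∈ S, levelsWeight P D x * cExp P Y {ω | D ω = x} := by
  rw [betaTWFE, integral_comp_mul_eq_sum hD hDS (g := fun x => x - meanR P D) (by fun_prop) hY,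
    sum_div]
  refine sum_congr rfl fun x _ => ?_
  rw [levelsWeight, ← toReal_measure_mul_cExp]
  ring

end LevelSets

theorem twfe_levels_decomposition_general
    {Ω : Type*} [MeasurableSpace Ω] (P : Measure Ω) [IsProbabilityMeasure P]
    (J : ℕ) (d : ℕ → ℝ)
    (hmono : ∀ i j : ℕ, i < j → j ≤ J → d i < d j)
    (D : Ω → ℝ) (hD : Measurable D)
    (hDval : ∀ ω, ∃ j ≤ J, D ω = d j)
    (ΔY : Ω → ℝ) (hΔYi : Integrable ΔY P) :
    betaTWFE P D ΔY =
      ∑ j ∈ Finset.Icc 0 J, levelsWeight P D (d j) *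
        (cExp P ΔY {ω | D ω = d j} - cExp P ΔY {ω | D ω = d 0}) ∧
    ∑ j ∈ Finset.Icc 0 J, levelsWeight P D (d j) = 0 := by
  have hinj : Set.InjOn d (Icc 0 J) :=
    StrictMonoOn.injOn fun i _ j hj hij => hmono i j hij (mem_Icc.mp hj).2
  have hDS : ∀ ω, D ω ∈ (Icc 0 J).image d := fun ω => by
    obtain ⟨j, hj, hω⟩ := hDval ω
    exact hω ▸ mem_image_of_mem d (mem_Icc.mpr ⟨j.zero_le, hj⟩)
  have hweights := sum_levelsWeight_eq_zero (P := P) hD hDS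
  rw [sum_image (f := fun x => levelsWeight P D x) hinj] at hweights
  refine ⟨?_, hweights⟩
  rw [sum_mul_sub_const_of_sum_eq_zero hweights,
    betaTWFE_eq_sum_levelsWeight_mul_cExp hD hDS hΔYi,
    sum_image (f := fun x => levelsWeight P D x * cExp P ΔY {ω | D ω = x}) hinj]

/-- TWFE as a weighted combination of level comparisons to the untreated
group: `β^twfe = Σ_{d ∈ 𝒟} w^{lev}(d)·(m(d) − m(d 0))`, where the weights sum to zero,
so `β^twfe` cannot be interpreted as a weighted average of level effects. -/
theorem twfe_levels_decomposition
    {Ω : Type*} [MeasurableSpace Ω] (P : Measure Ω) [IsProbabilityMeasure P]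
    (J : ℕ) (d : ℕ → ℝ) (hd0 : d 0 = 0)
    (hmono : ∀ i j : ℕ, i < j → j ≤ J → d i < d j)
    (D : Ω → ℝ) (hD : Measurable D)
    (hDval : ∀ ω, ∃ j ≤ J, D ω = d j)
    (hp : ∀ j ≤ J, 0 < P {ω | D ω = d j})
    (ΔY : Ω → ℝ) (hΔYm : Measurable ΔY) (hΔYi : Integrable ΔY P) :
    betaTWFE P D ΔY =
      ∑ j ∈ Finset.Icc 0 J, levelsWeight P D (d j) *
        (cExp P ΔY {ω | D ω = d j} - cExp P ΔY {ω | D ω = d 0}) ∧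
    ∑ j ∈ Finset.Icc 0 J, levelsWeight P D (d j) = 0 :=
  twfe_levels_decomposition_general P J d hmono D hD hDval ΔY hΔYi
end

section
/- Under strong parallel trends (SPT-MP), for every g ∈ {2, …, 𝒯}, every t with g ≤ t ≤ 𝒯, and every d ∈ 𝒟₊, the group-time average treatment effect is identified by comparison with not-yet-treated units: ATE(g, t, d) = E[Y_t − Y_{g−1} | G = g, D = d] − E[Y_t − Y_{g−1} | W_t = 0] (note P(W_t = 0) ≥ P(G = 𝒯+1) > 0). -/
open MeasureTheory

lemma cExp_mul_meas {Ω : Type*} [MeasurableSpace Ω] (P : Measure Ω) [IsFiniteMeasure P]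
    (X : Ω → ℝ) (A : Set Ω) (hA : P A ≠ 0) :
    ∫ ω in A, X ω ∂P = cExp P X A * (P A).toReal := by
  unfold cExp
  rw [div_mul_cancel₀]
  exact ENNReal.toReal_ne_zero.mpr ⟨hA, measure_ne_top P A⟩

lemma cExp_of_integral_eq {Ω : Type*} [MeasurableSpace Ω] (P : Measure Ω) [IsFiniteMeasure P]
    (X : Ω → ℝ) (A : Set Ω) (c : ℝ) (hA : P A ≠ 0)
    (h : ∫ ω in A, X ω ∂P = c * (P A).toReal) : cExp P X A = c := by
  unfold cExp
  rw [h, mul_div_assoc, div_self (ENNReal.toReal_ne_zero.mpr ⟨hA, measure_ne_top P A⟩), mul_one]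

lemma telescope_sum {Ω : Type*} (Y0 : ℕ → Ω → ℝ) (g : ℕ) (hg : 1 ≤ g) :
    ∀ u, g - 1 ≤ u → ∀ ω, ∑ s ∈ Finset.Icc g u, (Y0 s ω - Y0 (s-1) ω) = Y0 u ω - Y0 (g-1) ω := by
  intro u hu
  induction u, hu using Nat.le_induction with
  | base => intro ω; rw [Finset.Icc_eq_empty (by omega)]; simp
  | succ u hu ih =>
    intro ω
    rw [Finset.sum_Icc_succ_top (by omega : g ≤ u + 1), ih ω]
    simp

/-- Staggered adoption with a multi-valued dose. Under strong parallel
trends (SPT-MP), for every group `g ∈ {2,…,T}`, post-treatment period `t` with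
`g ≤ t ≤ T`, and dose `d ∈ 𝒟₊`, the group-time ATE is identified by comparison with
not-yet-treated units:
`ATE(g,t,d) = E[Y_t − Y_{g−1} | G = g, D = d] − E[Y_t − Y_{g−1} | W_t = 0]`,
where `W_t = D·1{t ≥ G}`. -/
theorem ate_gtd_identified_strong_parallel_trends_mp
    {Ω : Type*} [MeasurableSpace Ω] (P : Measure Ω) [IsProbabilityMeasure P]
    (T : ℕ) (hT : 2 ≤ T)
    (Dpos : Finset ℝ) (hDposNe : Dpos.Nonempty) (hDposPos : ∀ d ∈ Dpos, (0 : ℝ) < d)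
    (D : Ω → ℝ) (hD : Measurable D)
    (G : Ω → ℕ) (hG : Measurable G)
    (hGrange : ∀ ω, 2 ≤ G ω ∧ G ω ≤ T + 1)
    (hDval : ∀ ω, D ω = 0 ∨ D ω ∈ Dpos)
    (hD0G : ∀ ω, D ω = 0 ↔ G ω = T + 1)
    (hpNever : 0 < P {ω | G ω = T + 1})
    (hpgd : ∀ g : ℕ, 2 ≤ g → g ≤ T → ∀ d ∈ Dpos, 0 < P {ω | G ω = g ∧ D ω = d})
    (Y0 : ℕ → Ω → ℝ) (hY0m : ∀ t, Measurable (Y0 t)) (hY0i : ∀ t, Integrable (Y0 t) P)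
    (Ypo : ℕ → ℕ → ℝ → Ω → ℝ)
    (hYpom : ∀ t g dd, Measurable (Ypo t g dd)) (hYpoi : ∀ t g dd, Integrable (Ypo t g dd) P)
    (hNoAnt : ∀ t g : ℕ, ∀ dd ∈ Dpos, 2 ≤ g → g ≤ T → t < g → Ypo t g dd = Y0 t)
    (Y : ℕ → Ω → ℝ)
    (hYobs : ∀ t ω, Y t ω = if t < G ω then Y0 t ω else Ypo t (G ω) (D ω) ω)
    (hSPT : ∀ g : ℕ, 2 ≤ g → g ≤ T → ∀ t : ℕ, 2 ≤ t → t ≤ T → ∀ dd ∈ Dpos,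
      cExp P (fun ω => Ypo t g dd ω - Y0 (t - 1) ω) {ω | G ω = g ∧ D ω = dd} =
        cExp P (fun ω => Ypo t g dd ω - Y0 (t - 1) ω) {ω | G ω = g} ∧
      cExp P (fun ω => Y0 t ω - Y0 (t - 1) ω) {ω | G ω = g ∧ D ω = dd} =
        cExp P (fun ω => Y0 t ω - Y0 (t - 1) ω) {ω | D ω = 0}) :
    ∀ g : ℕ, 2 ≤ g → g ≤ T → ∀ t : ℕ, g ≤ t → t ≤ T → ∀ dd ∈ Dpos,
      cExp P (fun ω => Ypo t g dd ω - Y0 t ω) {ω | G ω = g} =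
        cExp P (fun ω => Y t ω - Y (g - 1) ω) {ω | G ω = g ∧ D ω = dd} -
          cExp P (fun ω => Y t ω - Y (g - 1) ω)
            {ω | (if G ω ≤ t then D ω else 0) = 0} := by
  intro g hg2 hgT t hgt htT dd hdd
  have hfi : ∀ s : ℕ, Integrable (fun ω => Y0 s ω - Y0 (s-1) ω) P :=
    fun s => (hY0i s).sub (hY0i (s-1))
  set a : ℕ → ℝ := fun s => cExp P (fun ω => Y0 s ω - Y0 (s-1) ω) {ω | D ω = 0} with ha
  -- measurability of the relevant sets
  have hgrpm : ∀ g' : ℕ, MeasurableSet {ω | G ω = g'} :=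
    fun g' => hG (measurableSet_singleton g')
  have hatomm : ∀ (g' : ℕ) (d' : ℝ), MeasurableSet {ω | G ω = g' ∧ D ω = d'} := by
    intro g' d'
    have h : {ω | G ω = g' ∧ D ω = d'} = (G ⁻¹' {g'}) ∩ (D ⁻¹' {d'}) := by
      ext ω; simp [Set.mem_inter_iff]
    rw [h]
    exact (hG (measurableSet_singleton g')).inter (hD (measurableSet_singleton d'))
  have hA3m : MeasurableSet {ω | t < G ω} := hG measurableSet_Ioi
  -- positivity
  have hD0set : {ω | D ω = 0} = {ω | G ω = T + 1} := by ext ω; exact hD0G ω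
  have hpD0 : P {ω | D ω = 0} ≠ 0 := by rw [hD0set]; exact hpNever.ne'
  have hp2 : P {ω | G ω = g ∧ D ω = dd} ≠ 0 := (hpgd g hg2 hgT dd hdd).ne'
  have hp1 : P {ω | G ω = g} ≠ 0 :=
    (lt_of_lt_of_le (hpgd g hg2 hgT dd hdd) (measure_mono fun ω hω => hω.1)).ne'
  have hp3 : P {ω | t < G ω} ≠ 0 := by
    refine (lt_of_lt_of_le hpNever (measure_mono fun ω hω => ?_)).ne'
    simp only [Set.mem_setOf_eq] at hω ⊢
    omega
  -- single-atom increments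
  have hatom : ∀ s, 2 ≤ s → s ≤ T → ∀ g', 2 ≤ g' → g' ≤ T → ∀ d' ∈ Dpos,
      ∫ ω in {ω | G ω = g' ∧ D ω = d'}, (Y0 s ω - Y0 (s-1) ω) ∂P
        = a s * (P {ω | G ω = g' ∧ D ω = d'}).toReal := by
    intro s hs2 hsT g' hg'2 hg'T d' hd'
    have hspt := (hSPT g' hg'2 hg'T s hs2 hsT d' hd').2
    rw [cExp_mul_meas P (fun ω => Y0 s ω - Y0 (s-1) ω) _ (hpgd g' hg'2 hg'T d' hd').ne', hspt]
  -- group increments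
  have hgrp : ∀ s, 2 ≤ s → s ≤ T → ∀ g', 2 ≤ g' → g' ≤ T →
      ∫ ω in {ω | G ω = g'}, (Y0 s ω - Y0 (s-1) ω) ∂P = a s * (P {ω | G ω = g'}).toReal := by
    intro s hs2 hsT g' hg'2 hg'T
    have hdecomp : {ω | G ω = g'} = ⋃ d' ∈ Dpos, {ω | G ω = g' ∧ D ω = d'} := by
      ext ω
      simp only [Set.mem_setOf_eq, Set.mem_iUnion, exists_prop]
      constructor
      · intro h
        rcases hDval ω with h0 | hmem
        · exact absurd ((hD0G ω).mp h0) (by omega)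
        · exact ⟨D ω, hmem, h, rfl⟩
      · rintro ⟨d', _, h, _⟩; exact h
    have hdisj : (↑Dpos : Set ℝ).Pairwise
        (Function.onFun Disjoint fun d' => {ω | G ω = g' ∧ D ω = d'}) := by
      intro x _ y _ hxy
      simp only [Function.onFun, Set.disjoint_left, Set.mem_setOf_eq]
      rintro ω ⟨_, hx⟩ ⟨_, hy⟩
      exact hxy (hx.symm.trans hy)
    rw [hdecomp,
      integral_biUnion_finset Dpos (fun d' _ => hatomm g' d') hdisj
        (fun d' _ => (hfi s).integrableOn),
      measure_biUnion_finset hdisj (fun d' _ => hatomm g' d'),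
      ENNReal.toReal_sum (fun d' _ => measure_ne_top P _), Finset.mul_sum]
    exact Finset.sum_congr rfl (fun d' hd' => hatom s hs2 hsT g' hg'2 hg'T d' hd')
  -- never-treated increments
  have hD0int : ∀ s, ∫ ω in {ω | D ω = 0}, (Y0 s ω - Y0 (s-1) ω) ∂P
      = a s * (P {ω | D ω = 0}).toReal :=
    fun s => cExp_mul_meas P (fun ω => Y0 s ω - Y0 (s-1) ω) _ hpD0
  -- not-yet-treated increments
  have hnyt : ∀ s, 2 ≤ s → s ≤ T →
      ∫ ω in {ω | t < G ω}, (Y0 s ω - Y0 (s-1) ω) ∂P = a s * (P {ω | t < G ω}).toReal := by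
    intro s hs2 hsT
    have hdecomp : {ω | t < G ω} = ⋃ g' ∈ Finset.Icc (t+1) (T+1), {ω | G ω = g'} := by
      ext ω
      simp only [Set.mem_setOf_eq, Set.mem_iUnion, exists_prop, Finset.mem_Icc]
      constructor
      · intro h
        exact ⟨G ω, ⟨by omega, (hGrange ω).2⟩, rfl⟩
      · rintro ⟨g', ⟨h1, _⟩, h⟩; omega
    have hdisj : (↑(Finset.Icc (t+1) (T+1)) : Set ℕ).Pairwise
        (Function.onFun Disjoint fun g' => {ω | G ω = g'}) := by
      intro x _ y _ hxy
      simp only [Function.onFun, Set.disjoint_left, Set.mem_setOf_eq]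
      rintro ω hx hy
      exact hxy (hx.symm.trans hy)
    rw [hdecomp,
      integral_biUnion_finset _ (fun g' _ => hgrpm g') hdisj (fun g' _ => (hfi s).integrableOn),
      measure_biUnion_finset hdisj (fun g' _ => hgrpm g'),
      ENNReal.toReal_sum (fun g' _ => measure_ne_top P _), Finset.mul_sum]
    refine Finset.sum_congr rfl (fun g' hg' => ?_)
    rw [Finset.mem_Icc] at hg'
    by_cases hcase : g' ≤ T
    · exact hgrp s hs2 hsT g' (by omega) hcase
    · have hg'eq : g' = T + 1 := by omega
      subst hg'eq
      rw [← hD0set]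
      exact hD0int s
  -- rewrite the not-yet-treated event
  have hA3eq : {ω | (if G ω ≤ t then D ω else 0) = 0} = {ω | t < G ω} := by
    ext ω
    simp only [Set.mem_setOf_eq]
    by_cases h : G ω ≤ t
    · rw [if_pos h]
      constructor
      · intro h0; have := (hD0G ω).mp h0; omega
      · intro h0; omega
    · rw [if_neg h]
      constructor
      · intro _; omega
      · intro _; rfl
  -- observed-outcome rewrites
  have hY2 : Set.EqOn (fun ω => Y t ω - Y (g-1) ω)
      (fun ω => Ypo t g dd ω - Y0 (g-1) ω) {ω | G ω = g ∧ D ω = dd} := by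
    rintro ω ⟨hGω, hDω⟩
    simp only
    rw [hYobs t ω, hYobs (g-1) ω, if_neg (by omega : ¬ t < G ω),
      if_pos (by omega : g - 1 < G ω), hGω, hDω]
  have hY3 : Set.EqOn (fun ω => Y t ω - Y (g-1) ω)
      (fun ω => Y0 t ω - Y0 (g-1) ω) {ω | t < G ω} := by
    intro ω hω
    simp only [Set.mem_setOf_eq] at hω
    simp only
    rw [hYobs t ω, hYobs (g-1) ω, if_pos hω, if_pos (by omega : g - 1 < G ω)]
  -- SPT (a) for the pair (g,t)
  have hZ := (hSPT g hg2 hgT t (by omega) htT dd hdd).1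
  have hZi : Integrable (fun ω => Ypo t g dd ω - Y0 (t-1) ω) P :=
    (hYpoi t g dd).sub (hY0i (t-1))
  -- LHS computation
  have hLHS : cExp P (fun ω => Ypo t g dd ω - Y0 t ω) {ω | G ω = g}
      = cExp P (fun ω => Ypo t g dd ω - Y0 (t-1) ω) {ω | G ω = g ∧ D ω = dd} - a t := by
    refine cExp_of_integral_eq P _ _ _ hp1 ?_
    have hsplit : (fun ω => Ypo t g dd ω - Y0 t ω)
        = fun ω => (Ypo t g dd ω - Y0 (t-1) ω) - (Y0 t ω - Y0 (t-1) ω) := by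
      funext ω; ring
    rw [hsplit,
      integral_sub hZi.integrableOn (hfi t).integrableOn,
      hgrp t (by omega) htT g hg2 hgT,
      cExp_mul_meas P (fun ω => Ypo t g dd ω - Y0 (t-1) ω) _ hp1, ← hZ]
    ring
  -- first term on the RHS
  have hT1 : cExp P (fun ω => Y t ω - Y (g-1) ω) {ω | G ω = g ∧ D ω = dd}
      = cExp P (fun ω => Ypo t g dd ω - Y0 (t-1) ω) {ω | G ω = g ∧ D ω = dd}
        + ∑ s ∈ Finset.Icc g (t-1), a s := by
    refine cExp_of_integral_eq P _ _ _ hp2 ?_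
    rw [setIntegral_congr_fun (hatomm g dd) hY2]
    have hsplit : (fun ω => Ypo t g dd ω - Y0 (g-1) ω)
        = fun ω => (Ypo t g dd ω - Y0 (t-1) ω)
            + ∑ s ∈ Finset.Icc g (t-1), (Y0 s ω - Y0 (s-1) ω) := by
      funext ω
      rw [telescope_sum Y0 g (by omega) (t-1) (by omega) ω]
      ring
    have hSi : Integrable (fun ω => ∑ s ∈ Finset.Icc g (t-1), (Y0 s ω - Y0 (s-1) ω)) P :=
      integrable_finset_sum _ (fun s _ => hfi s)
    have hsc : ∀ s ∈ Finset.Icc g (t-1),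
        ∫ ω in {ω | G ω = g ∧ D ω = dd}, (Y0 s ω - Y0 (s-1) ω) ∂P
          = a s * (P {ω | G ω = g ∧ D ω = dd}).toReal := by
      intro s hs
      rw [Finset.mem_Icc] at hs
      exact hatom s (by omega) (by omega) g hg2 hgT dd hdd
    rw [hsplit,
      integral_add hZi.integrableOn hSi.integrableOn,
      integral_finset_sum _ (fun s _ => (hfi s).integrableOn),
      cExp_mul_meas P (fun ω => Ypo t g dd ω - Y0 (t-1) ω) _ hp2,
      Finset.sum_congr rfl hsc,
      ← Finset.sum_mul]
    ring
  -- second term on the RHS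
  have hT2 : cExp P (fun ω => Y t ω - Y (g-1) ω) {ω | t < G ω}
      = ∑ s ∈ Finset.Icc g t, a s := by
    refine cExp_of_integral_eq P _ _ _ hp3 ?_
    rw [setIntegral_congr_fun hA3m hY3]
    have hsplit : (fun ω => Y0 t ω - Y0 (g-1) ω)
        = fun ω => ∑ s ∈ Finset.Icc g t, (Y0 s ω - Y0 (s-1) ω) := by
      funext ω
      rw [telescope_sum Y0 g (by omega) t (by omega) ω]
    have hsc : ∀ s ∈ Finset.Icc g t,
        ∫ ω in {ω | t < G ω}, (Y0 s ω - Y0 (s-1) ω) ∂P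
          = a s * (P {ω | t < G ω}).toReal := by
      intro s hs
      rw [Finset.mem_Icc] at hs
      exact hnyt s (by omega) (by omega)
    rw [hsplit, integral_finset_sum _ (fun s _ => (hfi s).integrableOn),
      Finset.sum_congr rfl hsc,
      ← Finset.sum_mul]
  -- conclude
  rw [hA3eq, hLHS, hT1, hT2]
  have hsum : ∑ s ∈ Finset.Icc g t, a s = (∑ s ∈ Finset.Icc g (t-1), a s) + a t := by
    have h1 : t = (t-1) + 1 := by omega
    conv_lhs => rw [h1, Finset.sum_Icc_succ_top (by omega : g ≤ t - 1 + 1)]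
    rw [← h1]
  rw [hsum]
  ring
end

section
/- The within-group part of the two-way fixed-effects numerator equals a weighted sum of within-group covariances between post-minus-pre outcome changes and the dose: 𝒯^{−1}·Σ_{t=1}^{𝒯} Σ_{g=2}^{𝒯+1} E[(D − E[D | G = g])·Y_t·1{G = g}]·v(g, t) = Σ_{g=2}^{𝒯} (1 − Ḡ_g)·Ḡ_g·Cov(Ȳ^{POST(g)} − Ȳ^{PRE(g)}, D | G = g)·p_g. -/
open MeasureTheory

/-- Fraction of periods that group `g` spends treated: `Ḡ_g = (T − g + 1)/T` for
`g ∈ {2,…,T}` and `Ḡ_{T+1} = 0`. -/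
noncomputable def gBar (T g : ℕ) : ℝ :=
  if g = T + 1 then 0 else ((T : ℝ) - (g : ℝ) + 1) / (T : ℝ)

/-- `v(g, t) = 1{t ≥ g} − Ḡ_g` for `g ∈ {2,…,T}` and `v(T+1, t) = 0`. -/
noncomputable def vW (T g t : ℕ) : ℝ :=
  if g = T + 1 then 0 else (if g ≤ t then 1 else 0) - gBar T g

/-- Conditional covariance: `Cov(X, Z | A) = E[X·Z | A] − E[X | A]·E[Z | A]`. -/
noncomputable def cCov {Ω : Type*} [MeasurableSpace Ω] (P : Measure Ω)
    (X Z : Ω → ℝ) (A : Set Ω) : ℝ :=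
  cExp P (fun ω => X ω * Z ω) A - cExp P X A * cExp P Z A

open Finset

/-! The never-treated group has `v = 0`. For `g ≤ T`, the map
`X ↦ ∫_{G = g} (D − E[D | G = g])·X = p_g·Cov(X, D | G = g)` is linear, and the weight `v(g, t)`
is `1 − Ḡ_g` on the `T·Ḡ_g` post-periods and `−Ḡ_g` on the `T·(1 − Ḡ_g)` pre-periods. Hence
`T⁻¹·Σ_t v(g, t)·(·)` is `(1 − Ḡ_g)·Ḡ_g` times the post-mean minus the pre-mean, which is
`(1 − Ḡ_g)·Ḡ_g·p_g·Cov(Ȳ^{POST(g)} − Ȳ^{PRE(g)}, D | G = g)`. The dose takes finitely many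
values, so it is bounded and all products `D·Y_t` are integrable. -/

theorem integrable_mul_of_forall_mem_finset {Ω : Type*} [MeasurableSpace Ω] {P : Measure Ω}
    {S : Finset ℝ} {X Y : Ω → ℝ} (hX : AEStronglyMeasurable X P) (hXS : ∀ ω, X ω ∈ S)
    (hY : Integrable Y P) : Integrable (fun ω => X ω * Y ω) P :=
  hY.bdd_mul (c := ∑ d ∈ S, |d|) hX <| Filter.Eventually.of_forall fun ω =>
    single_le_sum (f := fun d => |d|) (fun d _ => abs_nonneg d) (hXS ω)

theorem setIntegral_sub_cExp_mul_eq_cCov_mul {Ω : Type*} [MeasurableSpace Ω] (P : Measure Ω)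
    [IsFiniteMeasure P] {X Z : Ω → ℝ} (A : Set Ω) (hX : Integrable X P)
    (hZX : Integrable (fun ω => Z ω * X ω) P) :
    ∫ ω in A, (Z ω - cExp P Z A) * X ω ∂P = cCov P X Z A * (P A).toReal := by
  rcases eq_or_ne (P A) 0 with hA | hA
  · simp [Measure.restrict_eq_zero.mpr hA, hA]
  have hp : (P A).toReal ≠ 0 := ENNReal.toReal_ne_zero.mpr ⟨hA, measure_ne_top P A⟩
  simp only [sub_mul]
  rw [integral_sub hZX.restrict (hX.restrict.const_mul _), integral_const_mul]
  unfold cCov cExp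
  simp only [mul_comm (Z _)]
  field_simp

theorem integral_mul_sum_sub_mul_sum {Ω : Type*} [MeasurableSpace Ω] {μ : Measure Ω}
    {ι : Type*} {f : ι → Ω → ℝ} (hf : ∀ i, Integrable (f i) μ) (α β : ℝ) (I J : Finset ι) :
    ∫ ω, (α * ∑ i ∈ I, f i ω - β * ∑ i ∈ J, f i ω) ∂μ =
      α * ∑ i ∈ I, ∫ ω, f i ω ∂μ - β * ∑ i ∈ J, ∫ ω, f i ω ∂μ := by
  rw [integral_sub ((integrable_finsetSum _ fun i _ => hf i).const_mul α)
      ((integrable_finsetSum _ fun i _ => hf i).const_mul β),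
    integral_const_mul, integral_const_mul,
    integral_finsetSum _ fun i _ => hf i, integral_finsetSum _ fun i _ => hf i]

theorem sum_Icc_mul_vW {T g : ℕ} (hg1 : 1 ≤ g) (hgT : g ≤ T) (a : ℕ → ℝ) :
    ∑ t ∈ Icc 1 T, a t * vW T g t =
      (1 - gBar T g) * ∑ t ∈ Icc g T, a t - gBar T g * ∑ t ∈ Icc 1 (g - 1), a t := by
  have hsplit : Icc 1 T = Icc g T ∪ Icc 1 (g - 1) := by
    ext t; simp only [mem_union, mem_Icc]; omega
  have hdisj : Disjoint (Icc g T) (Icc 1 (g - 1)) := by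
    rw [disjoint_left]; intro t; simp only [mem_Icc]; omega
  have hpost : ∀ t ∈ Icc g T, a t * vW T g t = (1 - gBar T g) * a t := fun t ht => by
    rw [vW, if_neg (by omega), if_pos (mem_Icc.mp ht).1, mul_comm]
  have hpre : ∀ t ∈ Icc 1 (g - 1), a t * vW T g t = -(gBar T g * a t) := fun t ht => by
    rw [vW, if_neg (by omega), if_neg (by simp only [mem_Icc] at ht; omega)]; ring
  rw [hsplit, sum_union hdisj, sum_congr rfl hpost, sum_congr rfl hpre, sum_neg_distrib,
    ← mul_sum, ← mul_sum, ← sub_eq_add_neg]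

theorem inv_mul_sum_Icc_mul_vW {T g : ℕ} (hg2 : 2 ≤ g) (hgT : g ≤ T) (a : ℕ → ℝ) :
    (1 / (T : ℝ)) * ∑ t ∈ Icc 1 T, a t * vW T g t =
      (1 - gBar T g) * gBar T g *
        (((T : ℝ) - g + 1)⁻¹ * ∑ t ∈ Icc g T, a t -
          ((g : ℝ) - 1)⁻¹ * ∑ t ∈ Icc 1 (g - 1), a t) := by
  have hgB : gBar T g = ((T : ℝ) - g + 1) / T := if_neg (by omega)
  rw [sum_Icc_mul_vW (by omega) hgT, hgB]
  have hT : (T : ℝ) ≠ 0 := Nat.cast_ne_zero.mpr (by omega)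
  have hpost : (T : ℝ) - g + 1 ≠ 0 := by
    have : (g : ℝ) ≤ T := by exact_mod_cast hgT
    linarith
  have hpre : (g : ℝ) - 1 ≠ 0 := by
    have : (2 : ℝ) ≤ g := by exact_mod_cast hg2
    linarith
  field_simp
  ring

theorem twfe_within_group_numerator_general
    {Ω : Type*} [MeasurableSpace Ω] (P : Measure Ω) [IsProbabilityMeasure P]
    (T : ℕ) (hT : 2 ≤ T)
    (Dpos : Finset ℝ)
    (D : Ω → ℝ) (hD : Measurable D)
    (G : Ω → ℕ)
    (hDval : ∀ ω, D ω = 0 ∨ D ω ∈ Dpos)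
    (Y : ℕ → Ω → ℝ) (hYi : ∀ t, Integrable (Y t) P) :
    (1 / (T : ℝ)) * ∑ t ∈ Finset.Icc 1 T, ∑ g ∈ Finset.Icc 2 (T + 1),
        (∫ ω in {ω | G ω = g}, (D ω - cExp P D {ω' | G ω' = g}) * Y t ω ∂P) * vW T g t =
      ∑ g ∈ Finset.Icc 2 T,
        (1 - gBar T g) * gBar T g *
          cCov P
            (fun ω => ((T : ℝ) - (g : ℝ) + 1)⁻¹ * ∑ s ∈ Finset.Icc g T, Y s ω -
              ((g : ℝ) - 1)⁻¹ * ∑ s ∈ Finset.Icc 1 (g - 1), Y s ω)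
            D {ω | G ω = g} *
          (P {ω | G ω = g}).toReal := by
  have hDS : ∀ ω, D ω ∈ insert 0 Dpos := fun ω => mem_insert.mpr (hDval ω)
  have hDY t := integrable_mul_of_forall_mem_finset hD.aestronglyMeasurable hDS (hYi t)
  have hv : ∀ t, vW T (T + 1) t = 0 := fun t => if_pos rfl
  rw [sum_comm, ← insert_Icc_right_eq_Icc_add_one (by omega : 2 ≤ T + 1), sum_insert (by simp)]
  simp only [hv, mul_zero, sum_const_zero, zero_add]
  rw [mul_sum]
  refine sum_congr rfl fun g hg => ?_
  obtain ⟨hg2, hgT⟩ := mem_Icc.mp hg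
  set A := {ω | G ω = g}
  set X := fun ω => ((T : ℝ) - (g : ℝ) + 1)⁻¹ * ∑ s ∈ Icc g T, Y s ω -
    ((g : ℝ) - 1)⁻¹ * ∑ s ∈ Icc 1 (g - 1), Y s ω
  have hX : Integrable X P :=
    ((integrable_finsetSum _ fun s _ => hYi s).const_mul _).sub
      ((integrable_finsetSum _ fun s _ => hYi s).const_mul _)
  have hf : ∀ t, Integrable (fun ω => (D ω - cExp P D A) * Y t ω) (P.restrict A) := fun t => by
    simp only [sub_mul]
    exact ((hDY t).sub ((hYi t).const_mul _)).restrict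
  rw [inv_mul_sum_Icc_mul_vW hg2 hgT, ← integral_mul_sum_sub_mul_sum hf,
    mul_assoc _ (cCov _ _ _ _), ← setIntegral_sub_cExp_mul_eq_cCov_mul P A hX
      (integrable_mul_of_forall_mem_finset hD.aestronglyMeasurable hDS hX)]
  congr 2 with ω
  simp only [X, mul_sub, mul_sum, mul_left_comm]

/-- The within-group part of the TWFE numerator equals a weighted sum of
within-group covariances between post-minus-pre outcome changes and the dose:
`T⁻¹·Σ_{t=1}^{T} Σ_{g=2}^{T+1} E[(D − E[D|G=g])·Y_t·1{G=g}]·v(g,t)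
  = Σ_{g=2}^{T} (1 − Ḡ_g)·Ḡ_g·Cov(Ȳ^{POST(g)} − Ȳ^{PRE(g)}, D | G = g)·p_g`. -/
theorem twfe_within_group_numerator
    {Ω : Type*} [MeasurableSpace Ω] (P : Measure Ω) [IsProbabilityMeasure P]
    (T : ℕ) (hT : 2 ≤ T)
    (Dpos : Finset ℝ) (hDposNe : Dpos.Nonempty) (hDposPos : ∀ d ∈ Dpos, (0 : ℝ) < d)
    (D : Ω → ℝ) (hD : Measurable D) (hDi : Integrable D P)
    (G : Ω → ℕ) (hG : Measurable G)
    (hGrange : ∀ ω, 2 ≤ G ω ∧ G ω ≤ T + 1)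
    (hDval : ∀ ω, D ω = 0 ∨ D ω ∈ Dpos)
    (hD0G : ∀ ω, D ω = 0 ↔ G ω = T + 1)
    (hpNever : 0 < P {ω | G ω = T + 1})
    (hpgd : ∀ g : ℕ, 2 ≤ g → g ≤ T → ∀ d ∈ Dpos, 0 < P {ω | G ω = g ∧ D ω = d})
    (Y : ℕ → Ω → ℝ) (hYm : ∀ t, Measurable (Y t)) (hYi : ∀ t, Integrable (Y t) P) :
    (1 / (T : ℝ)) * ∑ t ∈ Finset.Icc 1 T, ∑ g ∈ Finset.Icc 2 (T + 1),
        (∫ ω in {ω | G ω = g}, (D ω - cExp P D {ω' | G ω' = g}) * Y t ω ∂P) * vW T g t =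
      ∑ g ∈ Finset.Icc 2 T,
        (1 - gBar T g) * gBar T g *
          cCov P
            (fun ω => ((T : ℝ) - (g : ℝ) + 1)⁻¹ * ∑ s ∈ Finset.Icc g T, Y s ω -
              ((g : ℝ) - 1)⁻¹ * ∑ s ∈ Finset.Icc 1 (g - 1), Y s ω)
            D {ω | G ω = g} *
          (P {ω | G ω = g}).toReal :=
  twfe_within_group_numerator_general P T hT Dpos D hD G hDval Y hYi
end

section
/- The mean of the squared doubly-demeaned treatment equals the total two-way fixed-effects weight: 𝒯^{−1}·Σ_{t=1}^{𝒯} E[Ẅ_t²] = Σ_{g=2}^{𝒯} Var(D | G = g)·(1 − Ḡ_g)·Ḡ_g·p_g + Σ_{2 ≤ g < k ≤ 𝒯+1} [ (E[D | G = g])²·(1 − Ḡ_g)·(Ḡ_g − Ḡ_k) + (E[D | G = k])²·Ḡ_k·(Ḡ_g − Ḡ_k) + (E[D | G = g] − E[D | G = k])²·Ḡ_k·(1 − Ḡ_g) ]·p_g·p_k, where Var(D | A) := E[D² | A] − (E[D | A])². -/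
open MeasureTheory

/-!
With `v(g, t) = 1{t ≥ g} − Ḡ_g`, the time-demeaned treatment is `W_t − T⁻¹ ∑ₛ W_s = D · v(G, t)`,
so `Ẅ_t = Y_t − E[Y_t]` with `Y_t = D · v(G, t)` and `E[Ẅ_t²] = E[Y_t²] − E[Y_t]²`. Conditioning on
the cohort writes both moments as sums over `g` weighted by `E[D² | G = g] p_g` and
`E[D | G = g] p_g`; averaging over `t` replaces `v(g, t) v(k, t)` by `Ḡ_{max g k} − Ḡ_g Ḡ_k`. The
resulting quadratic form, split into diagonal and `g < k` parts with `∑ p_g = 1`, is the total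
weight.
-/

open Finset

section Timing

variable {T g k t : ℕ}

lemma gBar_eq_mean (hg2 : 2 ≤ g) (hg : g ≤ T + 1) :
    gBar T g = (∑ s ∈ Icc 1 T, if g ≤ s then (1 : ℝ) else 0) / T := by
  have hfilter : {s ∈ Icc 1 T | g ≤ s} = Icc g T := by
    ext; simp only [mem_filter, mem_Icc]; omega
  rw [sum_boole, hfilter, Nat.card_Icc, Nat.cast_sub hg, gBar]
  split_ifs with h
  · simp [h]
  · push_cast; ring

lemma gBar_mem_Icc (hg2 : 2 ≤ g) (hg : g ≤ T + 1) : gBar T g ∈ Set.Icc 0 1 := by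
  unfold gBar
  split_ifs with h
  · simp
  · have hgT : (g : ℝ) ≤ T := by exact_mod_cast (show g ≤ T by omega)
    have hg2' : (2 : ℝ) ≤ g := by exact_mod_cast hg2
    constructor
    · exact div_nonneg (by linarith) (by linarith)
    · rw [div_le_one (by linarith)]; linarith

lemma vW_eq (ht : t ≤ T) : vW T g t = (if g ≤ t then 1 else 0) - gBar T g := by
  by_cases hg : g = T + 1
  · subst hg
    have hgt : ¬ T + 1 ≤ t := by omega
    simp [vW, gBar, hgt]
  · simp only [vW, hg, if_false]

lemma abs_vW_le_one (hg2 : 2 ≤ g) (hg : g ≤ T + 1) : |vW T g t| ≤ 1 := by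
  obtain ⟨h0, h1⟩ := gBar_mem_Icc hg2 hg
  unfold vW
  split_ifs <;> rw [abs_le] <;> constructor <;> linarith

lemma sub_mean_ite_eq_mul_vW (hg2 : 2 ≤ g) (hg : g ≤ T + 1) (ht : t ≤ T) (x : ℝ) :
    (if g ≤ t then x else 0) - 1 / T * ∑ s ∈ Icc 1 T, (if g ≤ s then x else 0) =
      x * vW T g t := by
  simp_rw [← mul_boole _ x, ← mul_sum, vW_eq ht, gBar_eq_mean hg2 hg]
  ring

lemma sum_vW_mul_vW (hg2 : 2 ≤ g) (hg : g ≤ T + 1) (hk2 : 2 ≤ k) (hk : k ≤ T + 1) :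
    ∑ t ∈ Icc 1 T, vW T g t * vW T k t =
      T * (gBar T (max g k) - gBar T g * gBar T k) := by
  have hT : (T : ℝ) ≠ 0 := by exact_mod_cast (show T ≠ 0 by omega)
  have hind : ∀ t, ((if g ≤ t then 1 else 0) * (if k ≤ t then 1 else 0) : ℝ) =
      if max g k ≤ t then 1 else 0 := by
    intro t; simp only [max_le_iff, ite_zero_mul_ite_zero, mul_one]
  have hsum : ∀ j, 2 ≤ j → j ≤ T + 1 →
      ∑ t ∈ Icc 1 T, (if j ≤ t then (1 : ℝ) else 0) = T * gBar T j := by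
    intro j hj2 hj
    rw [gBar_eq_mean hj2 hj, mul_div_cancel₀ _ hT]
  rw [sum_congr rfl fun t ht => by rw [vW_eq (mem_Icc.1 ht).2, vW_eq (mem_Icc.1 ht).2]]
  simp only [sub_mul, mul_sub, hind, sum_sub_distrib, ← sum_mul, ← mul_sum, sum_const,
    Nat.card_Icc, hsum g hg2 hg, hsum k hk2 hk, hsum _ (le_max_of_le_left hg2) (max_le hg hk)]
  simp only [nsmul_eq_mul, Nat.add_sub_cancel]
  ring

end Timing

section Probability

variable {Ω : Type*} [MeasurableSpace Ω] {P : Measure Ω}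

lemma setIntegral_eq_cExp_mul [IsFiniteMeasure P] (X : Ω → ℝ) (A : Set Ω) :
    ∫ ω in A, X ω ∂P = cExp P X A * (P A).toReal := by
  unfold cExp
  by_cases hA : P A = 0
  · simp [setIntegral_measure_zero X hA]
  · rw [div_mul_cancel₀ _ (ENNReal.toReal_pos hA (measure_ne_top P A)).ne']

variable {α : Type*} [MeasurableSpace α] [MeasurableSingletonClass α]
  {G : Ω → α} {S : Finset α}

lemma integral_comp_mul_eq_sum_cExp [IsFiniteMeasure P] (hG : Measurable G)
    (hS : ∀ ω, G ω ∈ S) {X : Ω → ℝ} (hX : Integrable X P) (f : α → ℝ) :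
    ∫ ω, f (G ω) * X ω ∂P =
      ∑ g ∈ S, f g * (cExp P X {ω | G ω = g} * (P {ω | G ω = g}).toReal) := by
  have hfiber : ∀ g ∈ S, MeasurableSet {ω | G ω = g} :=
    fun g _ => hG (measurableSet_singleton g)
  have hunion : ⋃ g ∈ S, {ω | G ω = g} = Set.univ := by
    ext ω
    simp only [Set.mem_iUnion, Set.mem_univ, iff_true]
    exact ⟨G ω, hS ω, rfl⟩
  rw [← setIntegral_univ, ← hunion, integral_biUnion_finset S hfiber
    (Set.pairwiseDisjoint_fiber G S) fun g hg => ((hX.const_mul (f g)).integrableOn).congr_fun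
      (fun ω hω => by rw [hω]) (hfiber g hg)]
  refine sum_congr rfl fun g hg => ?_
  rw [← setIntegral_eq_cExp_mul, ← integral_const_mul]
  exact setIntegral_congr_fun (hfiber g hg) fun ω hω => by rw [hω]

lemma sum_measure_fiber_toReal_eq_one [IsProbabilityMeasure P] (hG : Measurable G)
    (hS : ∀ ω, G ω ∈ S) : ∑ g ∈ S, (P {ω | G ω = g}).toReal = 1 := by
  have h := sum_measureReal_preimage_singleton (μ := P) S fun g _ => hG (measurableSet_singleton g)
  have hpre : G ⁻¹' S = Set.univ := Set.eq_univ_of_forall hS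
  rwa [hpre, probReal_univ] at h

lemma integral_sub_integral_sq [IsProbabilityMeasure P] {X : Ω → ℝ} (hX : MemLp X 2 P) :
    ∫ ω, (X ω - ∫ ω', X ω' ∂P) ^ 2 ∂P = ∫ ω, X ω ^ 2 ∂P - (∫ ω, X ω ∂P) ^ 2 := by
  rw [← ProbabilityTheory.variance_eq_integral hX.aemeasurable,
    ProbabilityTheory.variance_eq_sub hX]
  rfl

end Probability

section Treatment

variable {Ω : Type*} [MeasurableSpace Ω] {P : Measure Ω} [IsProbabilityMeasure P]
  {T t : ℕ} {D : Ω → ℝ} {G : Ω → ℕ}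

lemma integral_sq_doubleDemeaned_treatment (ht : t ≤ T) (hD : MemLp D 2 P) (hG : Measurable G)
    (hGrange : ∀ ω, 2 ≤ G ω ∧ G ω ≤ T + 1) :
    ∫ ω, (((if G ω ≤ t then D ω else 0) -
          1 / T * ∑ s ∈ Icc 1 T, (if G ω ≤ s then D ω else 0)) -
        ((∫ ω', (if G ω' ≤ t then D ω' else 0) ∂P) -
          1 / T * ∑ s ∈ Icc 1 T, ∫ ω', (if G ω' ≤ s then D ω' else 0) ∂P)) ^ 2 ∂P =
      ∑ g ∈ Icc 2 (T + 1), vW T g t ^ 2 *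
          (cExp P (fun ω => D ω ^ 2) {ω | G ω = g} * (P {ω | G ω = g}).toReal) -
        (∑ g ∈ Icc 2 (T + 1), vW T g t *
          (cExp P D {ω | G ω = g} * (P {ω | G ω = g}).toReal)) ^ 2 := by
  have hDi : Integrable D P := hD.integrable one_le_two
  have hS : ∀ ω, G ω ∈ Icc 2 (T + 1) := fun ω => mem_Icc.2 (hGrange ω)
  have hW : ∀ s, Integrable (fun ω => if G ω ≤ s then D ω else 0) P := fun s =>
    (hDi.indicator (hG (measurableSet_Iic (a := s)))).congr
      (ae_of_all _ fun ω => by simp [Set.indicator])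
  set Y : Ω → ℝ := fun ω => vW T (G ω) t * D ω
  have hY : ∀ ω, (if G ω ≤ t then D ω else 0) -
      1 / T * ∑ s ∈ Icc 1 T, (if G ω ≤ s then D ω else 0) = Y ω := fun ω => by
    rw [sub_mean_ite_eq_mul_vW (hGrange ω).1 (hGrange ω).2 ht, mul_comm]
  have hEY : (∫ ω, (if G ω ≤ t then D ω else 0) ∂P) -
      1 / T * ∑ s ∈ Icc 1 T, ∫ ω, (if G ω ≤ s then D ω else 0) ∂P = ∫ ω, Y ω ∂P := by
    rw [← integral_finsetSum _ fun s _ => hW s, ← integral_const_mul,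
      ← integral_sub (hW t) ((integrable_finsetSum _ fun s _ => hW s).const_mul _)]
    exact integral_congr_ae (ae_of_all _ hY)
  have hYL2 : MemLp Y 2 P := by
    refine hD.of_le_mul (c := 1) ?_ (ae_of_all _ fun ω => ?_)
    · exact ((measurable_from_top (f := fun g => vW T g t)).comp hG).aestronglyMeasurable.mul hD.1
    · simp only [Y, norm_mul, Real.norm_eq_abs, one_mul]
      exact mul_le_of_le_one_left (abs_nonneg _) (abs_vW_le_one (hGrange ω).1 (hGrange ω).2)
  simp_rw [hY, hEY]
  have hmean := integral_comp_mul_eq_sum_cExp hG hS hDi fun g => vW T g t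
  have hsq := integral_comp_mul_eq_sum_cExp hG hS hD.integrable_sq fun g => vW T g t ^ 2
  beta_reduce at hmean hsq
  rw [integral_sub_integral_sq hYL2, ← hmean, ← hsq]
  simp only [Y, mul_pow]

end Treatment

section QuadraticForm

variable {ι : Type*} [LinearOrder ι]

lemma sum_sum_eq_sum_diag_add_sum_lt {M : Type*} [AddCommMonoid M] (s : Finset ι)
    (F : ι → ι → M) :
    ∑ i ∈ s, ∑ j ∈ s, F i j = ∑ i ∈ s, F i i + ∑ i ∈ s, ∑ j ∈ s with i < j, (F i j + F j i) := by
  have hsplit : ∀ i ∈ s, ∑ j ∈ s, F i j =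
      F i i + ∑ j ∈ s with i < j, F i j + ∑ j ∈ s with j < i, F i j := fun i hi => by
    rw [sum_filter, sum_filter, ← sum_ite_eq_of_mem s i (F i) hi, ← sum_add_distrib,
      ← sum_add_distrib]
    refine sum_congr rfl fun j _ => ?_
    rcases lt_trichotomy i j with h | rfl | h
    · simp [h, h.ne, h.not_gt]
    · simp
    · simp [h, h.ne', h.not_gt]
  have hswap : ∑ i ∈ s, ∑ j ∈ s with j < i, F i j = ∑ i ∈ s, ∑ j ∈ s with i < j, F j i := by
    simp only [sum_filter]
    exact sum_comm
  rw [sum_congr rfl hsplit, sum_add_distrib, sum_add_distrib, hswap, add_assoc,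
    ← sum_add_distrib]
  simp only [sum_add_distrib]

lemma sum_sub_sum_sum_eq_sum_add_sum_lt (s : Finset ι) {c : ι → ι → ℝ}
    (hc : ∀ i j, c i j = c j i) {p : ι → ℝ} (hp : ∑ i ∈ s, p i = 1) (q m : ι → ℝ) :
    ∑ i ∈ s, c i i * (q i * p i) - ∑ i ∈ s, ∑ j ∈ s, c i j * (m i * p i) * (m j * p j) =
      ∑ i ∈ s, (q i - m i ^ 2) * c i i * p i +
        ∑ i ∈ s, ∑ j ∈ s with i < j,
          (m i ^ 2 * c i i + m j ^ 2 * c j j - 2 * m i * m j * c i j) * p i * p j := by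
  set A : ι → ι → ℝ := fun i j => m i ^ 2 * c i i * p i * p j
  set B : ι → ι → ℝ := fun i j => c i j * (m i * p i) * (m j * p j)
  have hA : ∑ i ∈ s, ∑ j ∈ s, A i j = ∑ i ∈ s, m i ^ 2 * c i i * p i := by
    simp only [A, ← mul_sum, hp, mul_one]
  have hpair : ∀ i j, (m i ^ 2 * c i i + m j ^ 2 * c j j - 2 * m i * m j * c i j) * p i * p j =
      (A i j + A j i) - (B i j + B j i) := fun i j => by
    simp only [A, B, hc j i]; ring
  have hAdiag := sum_sum_eq_sum_diag_add_sum_lt s A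
  have hBdiag := sum_sum_eq_sum_diag_add_sum_lt s B
  have hdiag : ∑ i ∈ s, A i i = ∑ i ∈ s, B i i := sum_congr rfl fun i _ => by simp only [A, B]; ring
  rw [sum_congr rfl fun i _ => sum_congr rfl fun j _ => hpair i j]
  have hq : ∑ i ∈ s, c i i * (q i * p i) = ∑ i ∈ s, q i * c i i * p i :=
    sum_congr rfl fun i _ => by ring
  have hB : ∑ i ∈ s, ∑ j ∈ s, c i j * (m i * p i) * (m j * p j) = ∑ i ∈ s, ∑ j ∈ s, B i j := rfl
  simp only [sum_sub_distrib, sub_mul]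
  linarith

end QuadraticForm

section Weights

-- The covariance, over the periods `t`, of the timing indicators `1{t ≥ g}` and `1{t ≥ k}`.
noncomputable def timingCov (T g k : ℕ) : ℝ := gBar T (max g k) - gBar T g * gBar T k

variable {T : ℕ}

lemma timingCov_comm (g k : ℕ) : timingCov T g k = timingCov T k g := by
  simp only [timingCov, max_comm, mul_comm]

lemma mean_sum_sq_vW_sub_sq (a b : ℕ → ℝ) :
    1 / T * ∑ t ∈ Icc 1 T, (∑ g ∈ Icc 2 (T + 1), vW T g t ^ 2 * a g -
        (∑ g ∈ Icc 2 (T + 1), vW T g t * b g) ^ 2) =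
      ∑ g ∈ Icc 2 (T + 1), timingCov T g g * a g -
        ∑ g ∈ Icc 2 (T + 1), ∑ k ∈ Icc 2 (T + 1), timingCov T g k * b g * b k := by
  obtain rfl | hT := eq_or_ne T 0
  · simp
  have hgram : ∀ g ∈ Icc 2 (T + 1), ∀ k ∈ Icc 2 (T + 1),
      ∑ t ∈ Icc 1 T, vW T g t * vW T k t = T * timingCov T g k := fun g hg k hk => by
    rw [mem_Icc] at hg hk
    exact sum_vW_mul_vW hg.1 hg.2 hk.1 hk.2
  have hdiag : ∑ t ∈ Icc 1 T, ∑ g ∈ Icc 2 (T + 1), vW T g t ^ 2 * a g =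
      T * ∑ g ∈ Icc 2 (T + 1), timingCov T g g * a g := by
    rw [sum_comm, mul_sum]
    refine sum_congr rfl fun g hg => ?_
    rw [← sum_mul]
    simp only [sq]
    rw [hgram g hg g hg, mul_assoc]
  have hsq : ∀ t, (∑ g ∈ Icc 2 (T + 1), vW T g t * b g) ^ 2 =
      ∑ g ∈ Icc 2 (T + 1), ∑ k ∈ Icc 2 (T + 1), vW T g t * vW T k t * b g * b k := fun t => by
    rw [sq, sum_mul_sum]
    exact sum_congr rfl fun g _ => sum_congr rfl fun k _ => by ring
  have hoff : ∑ t ∈ Icc 1 T, (∑ g ∈ Icc 2 (T + 1), vW T g t * b g) ^ 2 =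
      T * ∑ g ∈ Icc 2 (T + 1), ∑ k ∈ Icc 2 (T + 1), timingCov T g k * b g * b k := by
    rw [sum_congr rfl fun t _ => hsq t, sum_comm, mul_sum]
    refine sum_congr rfl fun g hg => ?_
    rw [sum_comm, mul_sum]
    refine sum_congr rfl fun k hk => ?_
    rw [← sum_mul, ← sum_mul, hgram g hg k hk]
    ring
  rw [sum_sub_distrib, hdiag, hoff, ← mul_sub, one_div, inv_mul_cancel_left₀ (by exact_mod_cast hT)]

lemma twfe_weight_eq {p : ℕ → ℝ} (hp : ∑ g ∈ Icc 2 (T + 1), p g = 1) (m q : ℕ → ℝ) :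
    ∑ g ∈ Icc 2 (T + 1), timingCov T g g * (q g * p g) -
        ∑ g ∈ Icc 2 (T + 1), ∑ k ∈ Icc 2 (T + 1), timingCov T g k * (m g * p g) * (m k * p k) =
      ∑ g ∈ Icc 2 T, (q g - m g ^ 2) * (1 - gBar T g) * gBar T g * p g +
        ∑ g ∈ Icc 2 (T + 1), ∑ k ∈ Icc (g + 1) (T + 1),
          (m g ^ 2 * (1 - gBar T g) * (gBar T g - gBar T k) +
            m k ^ 2 * gBar T k * (gBar T g - gBar T k) +
            (m g - m k) ^ 2 * gBar T k * (1 - gBar T g)) * p g * p k := by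
  have hlast : timingCov T (T + 1) (T + 1) = 0 := by simp [timingCov, gBar]
  rw [sum_sub_sum_sum_eq_sum_add_sum_lt _ timingCov_comm hp]
  congr 1
  · refine (sum_subset (Icc_subset_Icc_right T.le_succ) fun g hg hgT => ?_).symm.trans
      (sum_congr rfl fun g _ => ?_)
    · obtain rfl : g = T + 1 := by simp only [mem_Icc] at hg hgT; omega
      rw [hlast, mul_zero, zero_mul]
    · simp only [timingCov, max_self]
      ring
  · refine sum_congr rfl fun g hg => ?_
    have hfilter : {k ∈ Icc 2 (T + 1) | g < k} = Icc (g + 1) (T + 1) := by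
      ext k; simp only [mem_filter, mem_Icc] at hg ⊢; omega
    rw [hfilter]
    refine sum_congr rfl fun k hk => ?_
    have hgk : g ≤ k := by simp only [mem_Icc] at hk; omega
    simp only [timingCov, max_self, max_eq_right hgk]
    ring

end Weights

theorem twfe_total_weight_general
    {Ω : Type*} [MeasurableSpace Ω] (P : Measure Ω) [IsProbabilityMeasure P]
    (T : ℕ)
    (Dpos : Finset ℝ)
    (D : Ω → ℝ) (hDi : Integrable D P)
    (G : Ω → ℕ) (hG : Measurable G)
    (hGrange : ∀ ω, 2 ≤ G ω ∧ G ω ≤ T + 1)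
    (hDval : ∀ ω, D ω = 0 ∨ D ω ∈ Dpos) :
    (1 / (T : ℝ)) * ∑ t ∈ Finset.Icc 1 T,
        ∫ ω,
          (((if G ω ≤ t then D ω else 0) -
              (1 / (T : ℝ)) * ∑ s ∈ Finset.Icc 1 T, (if G ω ≤ s then D ω else 0)) -
            ((∫ ω', (if G ω' ≤ t then D ω' else 0) ∂P) -
              (1 / (T : ℝ)) * ∑ s ∈ Finset.Icc 1 T,
                ∫ ω', (if G ω' ≤ s then D ω' else 0) ∂P)) ^ 2 ∂P =
      (∑ g ∈ Finset.Icc 2 T,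
        (cExp P (fun ω => D ω ^ 2) {ω | G ω = g} - (cExp P D {ω | G ω = g}) ^ 2) *
          (1 - gBar T g) * gBar T g * (P {ω | G ω = g}).toReal) +
      ∑ g ∈ Finset.Icc 2 (T + 1), ∑ k ∈ Finset.Icc (g + 1) (T + 1),
        ((cExp P D {ω | G ω = g}) ^ 2 * (1 - gBar T g) * (gBar T g - gBar T k) +
          (cExp P D {ω | G ω = k}) ^ 2 * gBar T k * (gBar T g - gBar T k) +
          (cExp P D {ω | G ω = g} - cExp P D {ω | G ω = k}) ^ 2 *
            gBar T k * (1 - gBar T g)) *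
          (P {ω | G ω = g}).toReal * (P {ω | G ω = k}).toReal := by
  have hDL2 : MemLp D 2 P := MemLp.of_bound hDi.1 (∑ d ∈ Dpos, |d|) (ae_of_all _ fun ω => by
    rcases hDval ω with h | h
    · simp [h, sum_nonneg]
    · exact single_le_sum (f := fun d => |d|) (fun _ _ => abs_nonneg _) h)
  rw [sum_congr rfl fun t ht => integral_sq_doubleDemeaned_treatment (mem_Icc.1 ht).2 hDL2 hG
    hGrange, mean_sum_sq_vW_sub_sq]
  exact twfe_weight_eq (sum_measure_fiber_toReal_eq_one hG fun ω => mem_Icc.2 (hGrange ω)) _ _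

/-- The mean of the squared doubly-demeaned treatment equals the total
TWFE weight:
`T⁻¹·Σ_{t=1}^{T} E[Ẅ_t²] = Σ_{g=2}^{T} Var(D|G=g)·(1 − Ḡ_g)·Ḡ_g·p_g
  + Σ_{2 ≤ g < k ≤ T+1} [E[D|G=g]²·(1 − Ḡ_g)·(Ḡ_g − Ḡ_k) + E[D|G=k]²·Ḡ_k·(Ḡ_g − Ḡ_k)
      + (E[D|G=g] − E[D|G=k])²·Ḡ_k·(1 − Ḡ_g)]·p_g·p_k`,
where `Ẅ_t = (W_t − T⁻¹·Σ_s W_s) − (E[W_t] − T⁻¹·Σ_s E[W_s])` and `W_t = D·1{t ≥ G}`. -/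
theorem twfe_total_weight
    {Ω : Type*} [MeasurableSpace Ω] (P : Measure Ω) [IsProbabilityMeasure P]
    (T : ℕ) (hT : 2 ≤ T)
    (Dpos : Finset ℝ) (hDposNe : Dpos.Nonempty) (hDposPos : ∀ d ∈ Dpos, (0 : ℝ) < d)
    (D : Ω → ℝ) (hD : Measurable D) (hDi : Integrable D P)
    (G : Ω → ℕ) (hG : Measurable G)
    (hGrange : ∀ ω, 2 ≤ G ω ∧ G ω ≤ T + 1)
    (hDval : ∀ ω, D ω = 0 ∨ D ω ∈ Dpos)
    (hD0G : ∀ ω, D ω = 0 ↔ G ω = T + 1)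
    (hpNever : 0 < P {ω | G ω = T + 1})
    (hpgd : ∀ g : ℕ, 2 ≤ g → g ≤ T → ∀ d ∈ Dpos, 0 < P {ω | G ω = g ∧ D ω = d}) :
    (1 / (T : ℝ)) * ∑ t ∈ Finset.Icc 1 T,
        ∫ ω,
          (((if G ω ≤ t then D ω else 0) -
              (1 / (T : ℝ)) * ∑ s ∈ Finset.Icc 1 T, (if G ω ≤ s then D ω else 0)) -
            ((∫ ω', (if G ω' ≤ t then D ω' else 0) ∂P) -
              (1 / (T : ℝ)) * ∑ s ∈ Finset.Icc 1 T,
                ∫ ω', (if G ω' ≤ s then D ω' else 0) ∂P)) ^ 2 ∂P =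
      (∑ g ∈ Finset.Icc 2 T,
        (cExp P (fun ω => D ω ^ 2) {ω | G ω = g} - (cExp P D {ω | G ω = g}) ^ 2) *
          (1 - gBar T g) * gBar T g * (P {ω | G ω = g}).toReal) +
      ∑ g ∈ Finset.Icc 2 (T + 1), ∑ k ∈ Finset.Icc (g + 1) (T + 1),
        ((cExp P D {ω | G ω = g}) ^ 2 * (1 - gBar T g) * (gBar T g - gBar T k) +
          (cExp P D {ω | G ω = k}) ^ 2 * gBar T k * (gBar T g - gBar T k) +
          (cExp P D {ω | G ω = g} - cExp P D {ω | G ω = k}) ^ 2 *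
            gBar T k * (1 - gBar T g)) *
          (P {ω | G ω = g}).toReal * (P {ω | G ω = k}).toReal :=
  twfe_total_weight_general P T Dpos D hDi G hG hGrange hDval
end
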